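/- arXiv:gr-qc/0004008 — 2 statements merged into one kernel-verified Lean document; each statement's English description precedes it below -/
import Mathlib

section
/- (Explicit partie-finie integral.) Let y₁ ≠ y₂ in ℝ³, r₁₂ = |y₁ − y₂|, and s₁, s₂ > 0. Then lim_{s→0⁺} [ ∫_{ℝ³∖(B̄(y₁,s) ∪ B̄(y₂,s))} r₁^{−3} r₂^{−3} d³x + (4π/r₁₂³) ln(s/s₁) + (4π/r₁₂³) ln(s/s₂) ] exists and equals (4π/r₁₂³) [ ln(r₁₂/s₁) + ln(r₁₂/s₂) ]; i.e. Pf_{s₁,s₂} ∫ d³x/(r₁³ r₂³) = (4π/r₁₂³)[ln(r₁₂/s₁) + ln(r₁₂/s₂)]. -/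
open MeasureTheory Filter Topology Real Asymptotics

noncomputable section

abbrev E3 : Type := EuclideanSpace ℝ (Fin 3)
abbrev S2 : Type := Metric.sphere (0 : E3) 1

/-- The surface measure `dΩ` on the unit sphere `S²` (total mass `4π`). -/
def dOmega : Measure S2 := (volume : Measure E3).toSphere

/-- A function on the unit sphere is smooth iff it is the restriction of
a smooth function on `ℝ³`. -/
def SmoothSphereFn (f : S2 → ℝ) : Prop :=
  ∃ g : E3 → ℝ, ContDiff ℝ (⊤ : ℕ∞) g ∧ ∀ n : S2, g (n : E3) = f n

/-- `F` admits a power-like singular expansion at `y` with coefficients `c`: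
the family of exponents (the `a`'s with `c a ≠ 0`) is bounded below, with only
finitely many exponents below any given bound, the coefficients are smooth
functions on the sphere, and for every `N`, `F(y + r n) = Σ_{a ≤ N} r^a (c a)(n)
+ o(r^N)` as `r → 0⁺`, uniformly in `n ∈ S²`. -/
structure HasSingExpansion (y : E3) (F : E3 → ℝ) (c : ℝ → S2 → ℝ) : Prop where
  smooth_coeffs : ∀ a : ℝ, SmoothSphereFn (c a)
  bddBelow : ∃ a₀ : ℝ, ∀ a : ℝ, a < a₀ → c a = 0
  finite_exponents : ∀ N : ℝ, {a : ℝ | a ≤ N ∧ c a ≠ 0}.Finite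
  expansion : ∀ N : ℕ, ∀ ε > 0, ∃ δ > 0, ∀ r : ℝ, 0 < r → r < δ → ∀ n : S2,
    |F (y + r • (n : E3)) - ∑ᶠ (a : ℝ) (_ : a ≤ (N : ℝ)), r ^ a * c a n| ≤ ε * r ^ (N : ℝ)

/-- The exponents of the singular expansion are integers. -/
def IntegerExponents (c : ℝ → S2 → ℝ) : Prop :=
  ∀ a : ℝ, c a ≠ 0 → ∃ k : ℤ, a = (k : ℝ)

/-- The Hadamard partie finie at the singular point, `(F)_y = (1/4π) ∫_{S²} f₀ dΩ`,
expressed in terms of the expansion coefficients `c` of `F`. -/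
def pfAt (c : ℝ → S2 → ℝ) : ℝ :=
  (4 * π)⁻¹ * ∫ n : S2, c 0 n ∂dOmega

/-- `F` is smooth on a punctured neighbourhood of `y`. -/
def SmoothNearPunctured (y : E3) (F : E3 → ℝ) : Prop :=
  ∃ U ∈ 𝓝 y, ContDiffOn ℝ (⊤ : ℕ∞) F (U \ {y})

/-- The quantity whose limit as `s → 0⁺` defines the Hadamard partie finie
`Pf_{s₁,s₂} ∫ F d³x`: the integral over `ℝ³` minus two balls of radius `s`,
plus the divergent subtractions built from the expansion coefficients `c` at `y₁`
and `d` at `y₂`. -/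
def pfApprox (y₁ y₂ : E3) (s₁ s₂ : ℝ) (F : E3 → ℝ) (c d : ℝ → S2 → ℝ) (s : ℝ) : ℝ :=
  (∫ x in (Metric.closedBall y₁ s ∪ Metric.closedBall y₂ s)ᶜ, F x)
    + (∑ᶠ (a : ℝ) (_ : a < -3), s ^ (a + 3) / (a + 3) * ∫ n : S2, c a n ∂dOmega)
    + Real.log (s / s₁) * (∫ n : S2, c (-3) n ∂dOmega)
    + (∑ᶠ (b : ℝ) (_ : b < -3), s ^ (b + 3) / (b + 3) * ∫ n : S2, d b n ∂dOmega)
    + Real.log (s / s₂) * (∫ n : S2, d (-3) n ∂dOmega)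

/-- `Pf_{s₁,s₂} ∫ F d³x` exists and equals `L`. -/
def HasPfIntegral (y₁ y₂ : E3) (s₁ s₂ : ℝ) (F : E3 → ℝ) (c d : ℝ → S2 → ℝ) (L : ℝ) : Prop :=
  Tendsto (pfApprox y₁ y₂ s₁ s₂ F c d) (𝓝[>] (0 : ℝ)) (𝓝 L)

/-- Membership in the class `𝓕`: smooth outside `{y₁, y₂}` and admitting singular
expansions at `y₁` (coefficients `c`) and `y₂` (coefficients `d`). -/
structure MemF (y₁ y₂ : E3) (F : E3 → ℝ) (c d : ℝ → S2 → ℝ) : Prop where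
  smooth : ContDiffOn ℝ (⊤ : ℕ∞) F ({y₁, y₂}ᶜ : Set E3)
  exp₁ : HasSingExpansion y₁ F c
  exp₂ : HasSingExpansion y₂ F d

/-- The partial derivative `∂_i F` (as a plain function, defined outside the
singularities via `fderiv`). -/
def pder (i : Fin 3) (F : E3 → ℝ) (x : E3) : ℝ :=
  fderiv ℝ F x (EuclideanSpace.single i 1)



section PFauxSection
open MeasureTheory Filter Topology Real Set



namespace PFaux

/-- The bipolar triangle region in the `(r₁, r₂)` plane. -/
def T (a s : ℝ) : Set (ℝ × ℝ) :=
  {q | s < q.1} ∩ {q | s < q.2} ∩ {q | |q.1 - q.2| < a} ∩ {q | a < q.1 + q.2}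

lemma mem_T {a s : ℝ} {q : ℝ × ℝ} :
    q ∈ T a s ↔ s < q.1 ∧ s < q.2 ∧ |q.1 - q.2| < a ∧ a < q.1 + q.2 := by
  simp [T, Set.mem_setOf_eq, and_assoc]

lemma isOpen_T (a s : ℝ) : IsOpen (T a s) := by
  apply IsOpen.inter
  apply IsOpen.inter
  apply IsOpen.inter
  · exact isOpen_lt continuous_const continuous_fst
  · exact isOpen_lt continuous_const continuous_snd
  · exact isOpen_lt ((continuous_fst.sub continuous_snd).abs) continuous_const
  · exact isOpen_lt continuous_const (continuous_fst.add continuous_snd)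

lemma measurableSet_T (a s : ℝ) : MeasurableSet (T a s) := (isOpen_T a s).measurableSet

lemma integrableOn_inv_sq_Ioi {s : ℝ} (hs : 0 < s) :
    IntegrableOn (fun x : ℝ => (x ^ 2)⁻¹) (Ioi s) := by
  have h := integrableOn_Ioi_rpow_of_lt (show (-2 : ℝ) < -1 by norm_num) hs
  apply h.congr_fun ?_ measurableSet_Ioi
  intro x hx
  have hx0 : 0 < x := hs.trans hx
  have : x ^ (-2 : ℝ) = (x ^ 2)⁻¹ := by
    rw [show (-2 : ℝ) = -(2:ℝ) by norm_num, Real.rpow_neg hx0.le]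
    norm_num [Real.rpow_two]
  simpa using this

lemma integrableOn_T {a s : ℝ} (hs : 0 < s) :
    IntegrableOn (fun q : ℝ × ℝ => (q.1 ^ 2 * q.2 ^ 2)⁻¹) (T a s) := by
  have h1 := integrableOn_inv_sq_Ioi hs
  have h2 : IntegrableOn (fun q : ℝ × ℝ => (q.1 ^ 2)⁻¹ * (q.2 ^ 2)⁻¹) (Ioi s ×ˢ Ioi s) := by
    rw [IntegrableOn, Measure.volume_eq_prod, ← Measure.prod_restrict]
    exact h1.mul_prod h1
  have h3 : IntegrableOn (fun q : ℝ × ℝ => (q.1 ^ 2 * q.2 ^ 2)⁻¹) (Ioi s ×ˢ Ioi s) := by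
    apply h2.congr_fun ?_ (measurableSet_Ioi.prod measurableSet_Ioi)
    intro q _; simp [mul_inv, mul_comm]
  apply h3.mono_set
  intro q hq
  rw [mem_T] at hq
  exact ⟨hq.1, hq.2.1⟩

end PFaux

namespace PFaux

lemma inner_integral {a s x : ℝ} (ha : 0 < a) (hs : 0 < s) (hx : s < x) :
    ∫ y in Ioo (max s |x - a|) (x + a), (x ^ 2 * y ^ 2)⁻¹
      = (x ^ 2)⁻¹ * ((max s |x - a|)⁻¹ - (x + a)⁻¹) := by
  set m := max s |x - a| with hm
  have hm0 : 0 < m := lt_max_of_lt_left hs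
  have hmlt : m < x + a := by
    rw [hm, max_lt_iff]
    constructor
    · linarith
    · rw [abs_lt]; constructor <;> linarith
  have h0 : ∀ y : ℝ, (x ^ 2 * y ^ 2)⁻¹ = (x ^ 2)⁻¹ * y ^ (-2 : ℤ) := by
    intro y; rw [mul_inv]; congr 1
  simp only [h0]
  rw [MeasureTheory.integral_const_mul]
  congr 1
  rw [← MeasureTheory.integral_Ioc_eq_integral_Ioo, ← intervalIntegral.integral_of_le hmlt.le]
  rw [integral_zpow]
  · norm_num
    ring
  · refine Or.inr ⟨by norm_num, ?_⟩
    rw [Set.uIcc_of_le hmlt.le]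
    rintro ⟨h1, h2⟩
    linarith
  
lemma indicator_section {a s x : ℝ} (ha : 0 < a) (hs : 0 < s) (hx : s < x) :
    (fun y => (T a s).indicator (fun q : ℝ × ℝ => (q.1 ^ 2 * q.2 ^ 2)⁻¹) (x, y))
      = (Ioo (max s |x - a|) (x + a)).indicator (fun y => (x ^ 2 * y ^ 2)⁻¹) := by
  ext y
  have : (x, y) ∈ T a s ↔ y ∈ Ioo (max s |x - a|) (x + a) := by
    rw [mem_T, Set.mem_Ioo, max_lt_iff, abs_lt, abs_lt]
    constructor
    · rintro ⟨_, h2, ⟨h3, h4⟩, h5⟩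
      exact ⟨⟨h2, by linarith, by linarith⟩, by linarith⟩
    · rintro ⟨⟨h1, h2, h3⟩, h4⟩
      exact ⟨hx, h1, ⟨by linarith, by linarith⟩, by linarith⟩
  by_cases hy : y ∈ Ioo (max s |x - a|) (x + a)
  · rw [Set.indicator_of_mem hy, Set.indicator_of_mem (this.2 hy)]
  · rw [Set.indicator_of_notMem hy, Set.indicator_of_notMem (fun h => hy (this.1 h))]

/-- The 1D reduced integrand. -/
def W (a s : ℝ) (x : ℝ) : ℝ := (x ^ 2)⁻¹ * ((max s |x - a|)⁻¹ - (x + a)⁻¹)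

lemma fubini_T {a s : ℝ} (ha : 0 < a) (hs : 0 < s) :
    ∫ q in T a s, (q.1 ^ 2 * q.2 ^ 2)⁻¹ = ∫ x in Ioi s, W a s x := by
  set f : ℝ × ℝ → ℝ := fun q => (q.1 ^ 2 * q.2 ^ 2)⁻¹ with hf
  have hInd : Integrable ((T a s).indicator f) := by
    rw [integrable_indicator_iff (measurableSet_T a s)]
    exact integrableOn_T hs
  have key : ∀ x : ℝ, ∫ y, (T a s).indicator f (x, y) = (Ioi s).indicator (W a s) x := by
    intro x
    by_cases hx : s < x
    · rw [indicator_section ha hs hx, MeasureTheory.integral_indicator measurableSet_Ioo,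
        inner_integral ha hs hx, Set.indicator_of_mem (Set.mem_Ioi.2 hx)]
      rfl
    · have hz : ∀ y : ℝ, (T a s).indicator f (x, y) = 0 := by
        intro y
        apply Set.indicator_of_notMem
        rw [mem_T]; push_neg; intro h; exact absurd h hx
      simp only [hz, MeasureTheory.integral_zero]
      rw [Set.indicator_of_notMem (by simpa using hx)]
  rw [← MeasureTheory.integral_indicator (measurableSet_T a s),
    ← MeasureTheory.integral_indicator measurableSet_Ioi]
  rw [Measure.volume_eq_prod] at hInd ⊢
  rw [MeasureTheory.integral_prod _ hInd]
  exact integral_congr_ae (Filter.Eventually.of_forall key)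

lemma integrableOn_W {a s : ℝ} (ha : 0 < a) (hs : 0 < s) :
    IntegrableOn (W a s) (Ioi s) := by
  set f : ℝ × ℝ → ℝ := fun q => (q.1 ^ 2 * q.2 ^ 2)⁻¹ with hf
  have hInd : Integrable ((T a s).indicator f) := by
    rw [integrable_indicator_iff (measurableSet_T a s)]
    exact integrableOn_T hs
  rw [Measure.volume_eq_prod] at hInd
  have h2 := hInd.integral_prod_left
  have key : ∀ x : ℝ, ∫ y, (T a s).indicator f (x, y) = (Ioi s).indicator (W a s) x := by
    intro x
    by_cases hx : s < x
    · rw [indicator_section ha hs hx, MeasureTheory.integral_indicator measurableSet_Ioo,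
        inner_integral ha hs hx, Set.indicator_of_mem (Set.mem_Ioi.2 hx)]
      rfl
    · have hz : ∀ y : ℝ, (T a s).indicator f (x, y) = 0 := by
        intro y
        apply Set.indicator_of_notMem
        rw [mem_T]; push_neg; intro h; exact absurd h hx
      simp only [hz, MeasureTheory.integral_zero]
      rw [Set.indicator_of_notMem (by simpa using hx)]
  rw [← integrable_indicator_iff measurableSet_Ioi]
  exact h2.congr (Filter.Eventually.of_forall key)

end PFaux

namespace PFaux

lemma piece1 {a s : ℝ} (ha : 0 < a) (hs : 0 < s) (hsa : s < a / 2) :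
    ∫ x in Ioc s (a - s), (x ^ 2)⁻¹ * ((a - x)⁻¹ - (x + a)⁻¹)
      = (2 * log (a - s) - log s - log (2 * a - s)) / a ^ 2
        - (2 * log s - log (a - s) - log (a + s)) / a ^ 2 := by
  have hle : s ≤ a - s := by linarith
  rw [← intervalIntegral.integral_of_le hle]
  have key : ∫ x in s..(a - s), (x ^ 2)⁻¹ * ((a - x)⁻¹ - (x + a)⁻¹)
      = ((2 * log (a - s) - log (a - (a - s)) - log ((a - s) + a)) / a ^ 2)
        - ((2 * log s - log (a - s) - log (s + a)) / a ^ 2) := by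
    apply intervalIntegral.integral_eq_sub_of_hasDerivAt
      (f := fun x => (2 * Real.log x - Real.log (a - x) - Real.log (x + a)) / a ^ 2)
    · intro x hx
      rw [Set.uIcc_of_le hle, Set.mem_Icc] at hx
      have hx0 : 0 < x := by linarith [hx.1]
      have h1 : 0 < a - x := by linarith [hx.2]
      have h2 : 0 < x + a := by linarith
      have d1 : HasDerivAt (fun y : ℝ => 2 * Real.log y) (2 * x⁻¹) x :=
        (Real.hasDerivAt_log hx0.ne').const_mul 2
      have d2 : HasDerivAt (fun y : ℝ => Real.log (a - y)) ((a - x)⁻¹ * (-1)) x :=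
        (Real.hasDerivAt_log h1.ne').comp x ((hasDerivAt_id x).const_sub a)
      have d3 : HasDerivAt (fun y : ℝ => Real.log (y + a)) ((x + a)⁻¹ * 1) x :=
        HasDerivAt.comp x (Real.hasDerivAt_log h2.ne') ((hasDerivAt_id x).add_const a)
      have := ((d1.sub d2).sub d3).div_const (a ^ 2)
      refine this.congr_deriv ?_
      field_simp
      ring
    · apply ContinuousOn.intervalIntegrable
      rw [Set.uIcc_of_le hle]
      apply ContinuousOn.mul
      · apply ContinuousOn.inv₀ (by fun_prop)
        intro x hx
        rw [Set.mem_Icc] at hx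
        have : 0 < x := by linarith [hx.1]
        positivity
      · apply ContinuousOn.sub
        · apply ContinuousOn.inv₀ (by fun_prop)
          intro x hx
          rw [Set.mem_Icc] at hx
          have : 0 < a - x := by linarith [hx.2]
          linarith
        · apply ContinuousOn.inv₀ (by fun_prop)
          intro x hx
          rw [Set.mem_Icc] at hx
          have : 0 < x + a := by linarith [hx.1]
          linarith
  rw [key, show a - (a - s) = s by ring, show (a - s) + a = 2 * a - s by ring,
    show s + a = a + s by ring]

lemma piece2 {a s : ℝ} (ha : 0 < a) (hs : 0 < s) (hsa : s < a / 2) :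
    ∫ x in Ioc (a - s) (a + s), (x ^ 2)⁻¹ * (s⁻¹ - (x + a)⁻¹)
      = (-((s * (a + s))⁻¹) + (a * (a + s))⁻¹ + (log (a + s) - log (2 * a + s)) / a ^ 2)
        - (-((s * (a - s))⁻¹) + (a * (a - s))⁻¹ + (log (a - s) - log (2 * a - s)) / a ^ 2) := by
  have hle : a - s ≤ a + s := by linarith
  rw [← intervalIntegral.integral_of_le hle]
  have key : ∫ x in (a - s)..(a + s), (x ^ 2)⁻¹ * (s⁻¹ - (x + a)⁻¹)
      = (-((s * (a + s))⁻¹) + (a * (a + s))⁻¹ + (log (a + s) - log ((a + s) + a)) / a ^ 2)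
        - (-((s * (a - s))⁻¹) + (a * (a - s))⁻¹ + (log (a - s) - log ((a - s) + a)) / a ^ 2) := by
    apply intervalIntegral.integral_eq_sub_of_hasDerivAt
      (f := fun x => -((s * x)⁻¹) + (a * x)⁻¹ + (Real.log x - Real.log (x + a)) / a ^ 2)
    · intro x hx
      rw [Set.uIcc_of_le hle, Set.mem_Icc] at hx
      have hx0 : 0 < x := by linarith [hx.1]
      have h2 : 0 < x + a := by linarith
      have d1 : HasDerivAt (fun y : ℝ => -((s * y)⁻¹)) (-(-(s * 1) / (s * x) ^ 2)) x := by
        exact (((hasDerivAt_id x).const_mul s).inv (by positivity)).neg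
      have d2 : HasDerivAt (fun y : ℝ => (a * y)⁻¹) (-(a * 1) / (a * x) ^ 2) x :=
        ((hasDerivAt_id x).const_mul a).inv (by positivity)
      have d3 : HasDerivAt (fun y : ℝ => Real.log y) x⁻¹ x := Real.hasDerivAt_log hx0.ne'
      have d4 : HasDerivAt (fun y : ℝ => Real.log (y + a)) ((x + a)⁻¹ * 1) x :=
        HasDerivAt.comp x (Real.hasDerivAt_log h2.ne') ((hasDerivAt_id x).add_const a)
      have := (d1.add d2).add ((d3.sub d4).div_const (a ^ 2))
      refine this.congr_deriv ?_
      field_simp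
      ring
    · apply ContinuousOn.intervalIntegrable
      rw [Set.uIcc_of_le hle]
      apply ContinuousOn.mul
      · apply ContinuousOn.inv₀ (by fun_prop)
        intro x hx
        rw [Set.mem_Icc] at hx
        have : 0 < x := by linarith [hx.1]
        positivity
      · apply ContinuousOn.sub continuousOn_const
        apply ContinuousOn.inv₀ (by fun_prop)
        intro x hx
        rw [Set.mem_Icc] at hx
        have : 0 < x + a := by linarith [hx.1]
        linarith
  rw [key, show (a + s) + a = 2 * a + s by ring, show (a - s) + a = 2 * a - s by ring]

lemma piece3_integrable {a s : ℝ} (ha : 0 < a) (hs : 0 < s) :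
    IntegrableOn (fun x : ℝ => (x ^ 2)⁻¹ * ((x - a)⁻¹ - (x + a)⁻¹)) (Ioi (a + s)) := by
  have hb : IntegrableOn (fun x : ℝ => ((a + s) / s) * x ^ (-3 : ℝ)) (Ioi (a + s)) :=
    (integrableOn_Ioi_rpow_of_lt (by norm_num) (by linarith)).const_mul _
  apply Integrable.mono' hb
  · apply ContinuousOn.aestronglyMeasurable ?_ measurableSet_Ioi
    apply ContinuousOn.mul
    · apply ContinuousOn.inv₀ (by fun_prop)
      intro x hx
      rw [Set.mem_Ioi] at hx
      have : 0 < x := by linarith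
      positivity
    · apply ContinuousOn.sub
      · apply ContinuousOn.inv₀ (by fun_prop)
        intro x hx
        rw [Set.mem_Ioi] at hx
        have : 0 < x - a := by linarith
        linarith
      · apply ContinuousOn.inv₀ (by fun_prop)
        intro x hx
        rw [Set.mem_Ioi] at hx
        have : 0 < x + a := by linarith
        linarith
  · rw [MeasureTheory.ae_restrict_iff' measurableSet_Ioi]
    apply Filter.Eventually.of_forall
    intro x hx
    rw [Set.mem_Ioi] at hx
    have hx0 : 0 < x := by linarith
    have h1 : 0 < x - a := by linarith
    have h2 : 0 < x + a := by linarith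
    have hval : (x ^ 2)⁻¹ * ((x - a)⁻¹ - (x + a)⁻¹) = 2 * a / (x ^ 2 * (x - a) * (x + a)) := by
      field_simp
      ring
    have hrp : x ^ (-3 : ℝ) = (x ^ 3)⁻¹ := by
      rw [Real.rpow_neg hx0.le]
      norm_cast
    rw [Real.norm_eq_abs, hval, hrp, abs_of_nonneg (by positivity)]
    have hre : (a + s) / s * (x ^ 3)⁻¹ = (a + s) / (s * x ^ 3) := by
      field_simp
    rw [hre, div_le_div_iff₀ (by positivity) (by positivity)]
    have h3 : s * x ≤ (a + s) * (x - a) := by nlinarith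
    have h4 : 2 * a ≤ x + a := by linarith
    nlinarith [mul_le_mul_of_nonneg_right h3 (by positivity : (0:ℝ) ≤ x ^ 2 * (x + a)),
      mul_le_mul_of_nonneg_left h4 (by positivity : (0:ℝ) ≤ s * x * x ^ 2),
      mul_pos (mul_pos hx0 hx0) h1]

lemma piece3 {a s : ℝ} (ha : 0 < a) (hs : 0 < s) :
    ∫ x in Ioi (a + s), (x ^ 2)⁻¹ * ((x - a)⁻¹ - (x + a)⁻¹)
      = 0 - (2 * (a * (a + s))⁻¹ + (log s - log (2 * a + s)) / a ^ 2) := by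
  set F : ℝ → ℝ := fun x => 2 * (a * x)⁻¹ + (Real.log (x - a) - Real.log (x + a)) / a ^ 2 with hF
  have hderiv : ∀ x ∈ Ioi (a + s), HasDerivAt F ((x ^ 2)⁻¹ * ((x - a)⁻¹ - (x + a)⁻¹)) x := by
    intro x hx
    rw [Set.mem_Ioi] at hx
    have hx0 : 0 < x := by linarith
    have h1 : 0 < x - a := by linarith
    have h2 : 0 < x + a := by linarith
    have d1 : HasDerivAt (fun y : ℝ => 2 * (a * y)⁻¹) (2 * (-(a * 1) / (a * x) ^ 2)) x :=
      (((hasDerivAt_id x).const_mul a).inv (by positivity)).const_mul 2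
    have d2 : HasDerivAt (fun y : ℝ => Real.log (y - a)) ((x - a)⁻¹ * 1) x :=
      HasDerivAt.comp x (Real.hasDerivAt_log h1.ne') ((hasDerivAt_id x).sub_const a)
    have d3 : HasDerivAt (fun y : ℝ => Real.log (y + a)) ((x + a)⁻¹ * 1) x :=
      HasDerivAt.comp x (Real.hasDerivAt_log h2.ne') ((hasDerivAt_id x).add_const a)
    have := d1.add ((d2.sub d3).div_const (a ^ 2))
    refine this.congr_deriv ?_
    field_simp
    ring
  have hderiv' : HasDerivAt F (((a+s) ^ 2)⁻¹ * (((a+s) - a)⁻¹ - ((a+s) + a)⁻¹)) (a + s) := by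
    have hx0 : 0 < a + s := by linarith
    have h1 : 0 < (a + s) - a := by linarith
    have h2 : 0 < (a + s) + a := by linarith
    have d1 : HasDerivAt (fun y : ℝ => 2 * (a * y)⁻¹) (2 * (-(a * 1) / (a * (a+s)) ^ 2)) (a+s) :=
      (((hasDerivAt_id (a+s)).const_mul a).inv (by positivity)).const_mul 2
    have d2 : HasDerivAt (fun y : ℝ => Real.log (y - a)) (((a+s) - a)⁻¹ * 1) (a+s) :=
      HasDerivAt.comp (a+s) (Real.hasDerivAt_log h1.ne') ((hasDerivAt_id (a+s)).sub_const a)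
    have d3 : HasDerivAt (fun y : ℝ => Real.log (y + a)) (((a+s) + a)⁻¹ * 1) (a+s) :=
      HasDerivAt.comp (a+s) (Real.hasDerivAt_log h2.ne') ((hasDerivAt_id (a+s)).add_const a)
    have := d1.add ((d2.sub d3).div_const (a ^ 2))
    refine this.congr_deriv ?_
    field_simp
    ring
  have htend : Tendsto F atTop (𝓝 0) := by
    have t1 : Tendsto (fun x : ℝ => 2 * (a * x)⁻¹) atTop (𝓝 (2 * 0)) := by
      apply Tendsto.const_mul
      apply Tendsto.inv_tendsto_atTop
      exact Tendsto.const_mul_atTop ha tendsto_id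
    have tratio : Tendsto (fun x : ℝ => (x - a) / (x + a)) atTop (𝓝 1) := by
      have h1 : Tendsto (fun x : ℝ => (1 - a / x) / (1 + a / x)) atTop (𝓝 ((1 - 0) / (1 + 0))) := by
        apply Tendsto.div
        · exact tendsto_const_nhds.sub (tendsto_const_nhds.div_atTop tendsto_id)
        · exact tendsto_const_nhds.add (tendsto_const_nhds.div_atTop tendsto_id)
        · norm_num
      rw [show ((1:ℝ) - 0) / (1 + 0) = 1 by norm_num] at h1
      apply h1.congr'
      filter_upwards [Filter.eventually_gt_atTop (a + 1)] with x hx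
      have hx0 : 0 < x := by linarith
      have h2 : 0 < x + a := by linarith
      field_simp
    have t2 : Tendsto (fun x : ℝ => (Real.log (x - a) - Real.log (x + a)) / a ^ 2)
        atTop (𝓝 (Real.log 1 / a ^ 2)) := by
      apply Tendsto.div_const
      have hlog : Tendsto (fun x : ℝ => Real.log ((x - a) / (x + a))) atTop (𝓝 (Real.log 1)) :=
        (Real.continuousAt_log one_ne_zero).tendsto.comp tratio
      apply hlog.congr'
      filter_upwards [Filter.eventually_gt_atTop (a + 1)] with x hx
      have h1 : x - a ≠ 0 := by
        have : 0 < x - a := by linarith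
        linarith
      have h2 : x + a ≠ 0 := by
        have : 0 < x + a := by linarith
        linarith
      rw [Real.log_div h1 h2]
    have h0 := t1.add t2
    simp only [Real.log_one, zero_div, mul_zero, add_zero] at h0
    exact h0
  have key := MeasureTheory.integral_Ioi_of_hasDerivAt_of_tendsto
    hderiv'.continuousAt.continuousWithinAt hderiv (piece3_integrable ha hs) htend
  rw [key, hF]
  simp only
  rw [show a + s - a = s by ring, show a + s + a = 2 * a + s by ring]

end PFaux

namespace PFaux

/-- The value of the triangle integral. -/
def Jval (a s : ℝ) : ℝ :=
  ((2 * log (a - s) - log s - log (2 * a - s)) / a ^ 2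
      - (2 * log s - log (a - s) - log (a + s)) / a ^ 2)
    + ((-((s * (a + s))⁻¹) + (a * (a + s))⁻¹ + (log (a + s) - log (2 * a + s)) / a ^ 2)
      - (-((s * (a - s))⁻¹) + (a * (a - s))⁻¹ + (log (a - s) - log (2 * a - s)) / a ^ 2))
    + (0 - (2 * (a * (a + s))⁻¹ + (log s - log (2 * a + s)) / a ^ 2))

lemma integral_T_value {a s : ℝ} (ha : 0 < a) (hs : 0 < s) (hsa : s < a / 2) :
    ∫ q in T a s, (q.1 ^ 2 * q.2 ^ 2)⁻¹ = Jval a s := by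
  rw [fubini_T ha hs]
  have hW := integrableOn_W ha hs
  have hsub1 : Ioc s (a - s) ⊆ Ioi s := Set.Ioc_subset_Ioi_self
  have hsub2 : Ioc (a - s) (a + s) ⊆ Ioi s := by
    intro x hx
    rw [Set.mem_Ioc] at hx
    rw [Set.mem_Ioi]
    linarith [hx.1]
  have hsub3 : Ioi (a + s) ⊆ Ioi s := Set.Ioi_subset_Ioi (by linarith)
  have hsplit1 : Ioi s = Ioc s (a + s) ∪ Ioi (a + s) :=
    (Set.Ioc_union_Ioi_eq_Ioi (by linarith)).symm
  have hsplit2 : Ioc s (a + s) = Ioc s (a - s) ∪ Ioc (a - s) (a + s) :=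
    (Set.Ioc_union_Ioc_eq_Ioc (by linarith) (by linarith)).symm
  have hdisj1 : Disjoint (Ioc s (a + s)) (Ioi (a + s)) := by
    rw [Set.disjoint_left]
    rintro x ⟨_, h1⟩ h2
    exact absurd (Set.mem_Ioi.mp h2) (not_lt.2 h1)
  have hdisj2 : Disjoint (Ioc s (a - s)) (Ioc (a - s) (a + s)) := by
    rw [Set.disjoint_left]
    rintro x ⟨_, h1⟩ ⟨h2, _⟩
    exact absurd h2 (not_lt.2 h1)
  rw [hsplit1, MeasureTheory.setIntegral_union hdisj1 measurableSet_Ioi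
    (hW.mono_set (hsplit1 ▸ Set.subset_union_left)) (hW.mono_set hsub3)]
  rw [hsplit2, MeasureTheory.setIntegral_union hdisj2 measurableSet_Ioc
    (hW.mono_set hsub1) (hW.mono_set hsub2)]
  have e1 : ∫ x in Ioc s (a - s), W a s x
      = ∫ x in Ioc s (a - s), (x ^ 2)⁻¹ * ((a - x)⁻¹ - (x + a)⁻¹) := by
    apply MeasureTheory.setIntegral_congr_fun measurableSet_Ioc
    intro x hx
    rw [Set.mem_Ioc] at hx
    unfold W
    congr 2
    rw [abs_of_nonpos (by linarith [hx.2]), max_eq_right (by linarith [hx.2])]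
    ring
  have e2 : ∫ x in Ioc (a - s) (a + s), W a s x
      = ∫ x in Ioc (a - s) (a + s), (x ^ 2)⁻¹ * (s⁻¹ - (x + a)⁻¹) := by
    apply MeasureTheory.setIntegral_congr_fun measurableSet_Ioc
    intro x hx
    rw [Set.mem_Ioc] at hx
    unfold W
    congr 2
    rw [max_eq_left]
    rw [abs_le]
    constructor <;> linarith [hx.1, hx.2]
  have e3 : ∫ x in Ioi (a + s), W a s x
      = ∫ x in Ioi (a + s), (x ^ 2)⁻¹ * ((x - a)⁻¹ - (x + a)⁻¹) := by
    apply MeasureTheory.setIntegral_congr_fun measurableSet_Ioi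
    intro x hx
    rw [Set.mem_Ioi] at hx
    unfold W
    congr 2
    rw [abs_of_nonneg (by linarith), max_eq_right (by linarith)]
  rw [e1, e2, e3, piece1 ha hs hsa, piece2 ha hs hsa, piece3 ha hs]
  rfl

end PFaux



namespace PFaux

/-- lintegral version of the polar coordinates change of variables. -/
lemma lintegral_comp_polarCoord_symm (f : ℝ × ℝ → ENNReal) :
    ∫⁻ p in polarCoord.target, ENNReal.ofReal p.1 * f (polarCoord.symm p) = ∫⁻ p, f p := by
  set B : ℝ × ℝ → ℝ × ℝ →L[ℝ] ℝ × ℝ := fun p =>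
    LinearMap.toContinuousLinearMap (Matrix.toLin (Module.Basis.finTwoProd ℝ) (Module.Basis.finTwoProd ℝ)
      !![Real.cos p.2, -p.1 * Real.sin p.2; Real.sin p.2, p.1 * Real.cos p.2]) with hB
  have A : ∀ p ∈ polarCoord.target, HasFDerivWithinAt polarCoord.symm (B p) polarCoord.target p :=
    fun p _ => (hasFDerivAt_polarCoord_symm p).hasFDerivWithinAt
  have B_det : ∀ p, (B p).det = p.1 := by
    intro p
    conv_rhs => rw [← one_mul p.1, ← cos_sq_add_sin_sq p.2]
    simp only [hB, neg_mul, LinearMap.det_toContinuousLinearMap, LinearMap.det_toLin,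
      Matrix.det_fin_two_of, sub_neg_eq_add]
    ring
  symm
  calc
    ∫⁻ p, f p = ∫⁻ p in polarCoord.source, f p := by
      rw [← setLIntegral_univ]
      exact (setLIntegral_congr polarCoord_source_ae_eq_univ.symm)
    _ = ∫⁻ p in polarCoord.symm '' polarCoord.target, f p := by
      rw [polarCoord.symm_image_target_eq_source]
    _ = ∫⁻ p in polarCoord.target, ENNReal.ofReal |(B p).det| * f (polarCoord.symm p) := by
      apply lintegral_image_eq_lintegral_abs_det_fderiv_mul volume
        polarCoord.open_target.measurableSet A polarCoord.symm.injOn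
    _ = ∫⁻ p in polarCoord.target, ENNReal.ofReal p.1 * f (polarCoord.symm p) := by
      apply setLIntegral_congr_fun_ae polarCoord.open_target.measurableSet
      apply Filter.Eventually.of_forall
      intro p hp
      rw [B_det, abs_of_pos hp.1]

/-- The half-plane bipolar domain. -/
def U (a s : ℝ) : Set (ℝ × ℝ) :=
  {p | 0 < p.2} ∩ {p | s ^ 2 < p.1 ^ 2 + p.2 ^ 2} ∩ {p | s ^ 2 < (p.1 - a) ^ 2 + p.2 ^ 2}

lemma mem_U {a s : ℝ} {p : ℝ × ℝ} :
    p ∈ U a s ↔ 0 < p.2 ∧ s ^ 2 < p.1 ^ 2 + p.2 ^ 2 ∧ s ^ 2 < (p.1 - a) ^ 2 + p.2 ^ 2 := by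
  simp [U, Set.mem_setOf_eq, and_assoc]

lemma isOpen_U (a s : ℝ) : IsOpen (U a s) := by
  apply IsOpen.inter
  apply IsOpen.inter
  · exact isOpen_lt continuous_const continuous_snd
  · exact isOpen_lt continuous_const (by fun_prop)
  · exact isOpen_lt continuous_const (by fun_prop)

/-- The bipolar map `(z, ρ) ↦ (r₁, r₂)`. -/
def Psi (a : ℝ) : ℝ × ℝ → ℝ × ℝ :=
  fun p => (Real.sqrt (p.1 ^ 2 + p.2 ^ 2), Real.sqrt ((p.1 - a) ^ 2 + p.2 ^ 2))

/-- The derivative matrix of `Psi`. -/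
def PsiD (a : ℝ) (p : ℝ × ℝ) : ℝ × ℝ →L[ℝ] ℝ × ℝ :=
  LinearMap.toContinuousLinearMap (Matrix.toLin (Module.Basis.finTwoProd ℝ) (Module.Basis.finTwoProd ℝ)
    !![p.1 / Real.sqrt (p.1 ^ 2 + p.2 ^ 2), p.2 / Real.sqrt (p.1 ^ 2 + p.2 ^ 2);
       (p.1 - a) / Real.sqrt ((p.1 - a) ^ 2 + p.2 ^ 2),
       p.2 / Real.sqrt ((p.1 - a) ^ 2 + p.2 ^ 2)])

lemma psiD_det {a : ℝ} (p : ℝ × ℝ) :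
    (PsiD a p).det = p.1 * p.2 / (Real.sqrt (p.1 ^ 2 + p.2 ^ 2)
      * Real.sqrt ((p.1 - a) ^ 2 + p.2 ^ 2))
      - p.2 * (p.1 - a) / (Real.sqrt (p.1 ^ 2 + p.2 ^ 2)
      * Real.sqrt ((p.1 - a) ^ 2 + p.2 ^ 2)) := by
  simp only [PsiD, LinearMap.det_toContinuousLinearMap, LinearMap.det_toLin,
    Matrix.det_fin_two_of]
  field_simp

lemma hasFDerivAt_sqrt_quad {p : ℝ × ℝ} (h : p.1 ^ 2 + p.2 ^ 2 ≠ 0) :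
    HasFDerivAt (fun q : ℝ × ℝ => Real.sqrt (q.1 ^ 2 + q.2 ^ 2))
      ((p.1 / Real.sqrt (p.1 ^ 2 + p.2 ^ 2)) • ContinuousLinearMap.fst ℝ ℝ ℝ
        + (p.2 / Real.sqrt (p.1 ^ 2 + p.2 ^ 2)) • ContinuousLinearMap.snd ℝ ℝ ℝ) p := by
  have hsq : Real.sqrt (p.1 ^ 2 + p.2 ^ 2) ≠ 0 := by
    rw [Real.sqrt_ne_zero']
    exact lt_of_le_of_ne (by positivity) (Ne.symm h)
  have q1 : HasFDerivAt (fun q : ℝ × ℝ => q.1 ^ 2 + q.2 ^ 2)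
      ((2 * p.1) • ContinuousLinearMap.fst ℝ ℝ ℝ
        + (2 * p.2) • ContinuousLinearMap.snd ℝ ℝ ℝ) p := by
    have e : (fun q : ℝ × ℝ => q.1 ^ 2 + q.2 ^ 2) = fun q : ℝ × ℝ => q.1 * q.1 + q.2 * q.2 := by
      ext q; ring
    rw [e]
    have h1 := (hasFDerivAt_fst (𝕜 := ℝ) (p := p)).mul (hasFDerivAt_fst (𝕜 := ℝ) (p := p))
    have h2 := (hasFDerivAt_snd (𝕜 := ℝ) (p := p)).mul (hasFDerivAt_snd (𝕜 := ℝ) (p := p))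
    exact (h1.add h2).congr_fderiv (by ext <;> simp <;> ring)
  have hs := (Real.hasDerivAt_sqrt h).comp_hasFDerivAt p q1
  apply hs.congr_fderiv
  rw [smul_add, smul_smul, smul_smul]
  congr 1 <;> congr 1 <;> field_simp <;> ring

set_option maxHeartbeats 1000000 in
lemma hasFDerivAt_Psi {a : ℝ} {p : ℝ × ℝ} (h1 : p.1 ^ 2 + p.2 ^ 2 ≠ 0)
    (h2 : (p.1 - a) ^ 2 + p.2 ^ 2 ≠ 0) :
    HasFDerivAt (Psi a) (PsiD a p) p := by
  have c1 := hasFDerivAt_sqrt_quad h1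
  have c2' : HasFDerivAt (fun q : ℝ × ℝ => Real.sqrt (q.1 ^ 2 + q.2 ^ 2))
      (((p.1 - a) / Real.sqrt ((p.1 - a) ^ 2 + p.2 ^ 2)) • ContinuousLinearMap.fst ℝ ℝ ℝ
        + (p.2 / Real.sqrt ((p.1 - a) ^ 2 + p.2 ^ 2)) • ContinuousLinearMap.snd ℝ ℝ ℝ)
      (p.1 - a, p.2) := hasFDerivAt_sqrt_quad (p := (p.1 - a, p.2)) (by simpa using h2)
  have sh : HasFDerivAt (fun q : ℝ × ℝ => (q.1 - a, q.2))
      ((ContinuousLinearMap.fst ℝ ℝ ℝ).prod (ContinuousLinearMap.snd ℝ ℝ ℝ)) p := by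
    apply HasFDerivAt.prodMk
    · exact (hasFDerivAt_fst (𝕜 := ℝ) (p := p)).sub_const a
    · exact hasFDerivAt_snd
  have c2 := c2'.comp p sh
  have goal12 : HasFDerivAt (fun q : ℝ × ℝ => Real.sqrt ((q.1 - a) ^ 2 + q.2 ^ 2))
      (((p.1 - a) / Real.sqrt ((p.1 - a) ^ 2 + p.2 ^ 2)) • ContinuousLinearMap.fst ℝ ℝ ℝ
        + (p.2 / Real.sqrt ((p.1 - a) ^ 2 + p.2 ^ 2)) • ContinuousLinearMap.snd ℝ ℝ ℝ) p := by
    exact c2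
  unfold Psi PsiD
  rw [Matrix.toLin_finTwoProd_toContinuousLinearMap]
  apply HasFDerivAt.prodMk
  · exact c1
  · exact goal12

end PFaux

namespace PFaux

lemma injOn_Psi {a s : ℝ} (ha : 0 < a) (hs : 0 < s) : Set.InjOn (Psi a) (U a s) := by
  intro p hp q hq h
  rw [mem_U] at hp hq
  have h1 := congrArg Prod.fst h
  have h2 := congrArg Prod.snd h
  simp only [Psi] at h1 h2
  have e1 : p.1 ^ 2 + p.2 ^ 2 = q.1 ^ 2 + q.2 ^ 2 :=
    (Real.sqrt_inj (by positivity) (by positivity)).mp h1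
  have e2 : (p.1 - a) ^ 2 + p.2 ^ 2 = (q.1 - a) ^ 2 + q.2 ^ 2 :=
    (Real.sqrt_inj (by positivity) (by positivity)).mp h2
  have hx : p.1 = q.1 := by
    have h3 : 2 * a * p.1 = 2 * a * q.1 := by nlinarith
    exact mul_left_cancel₀ (by positivity) h3
  have hy : p.2 = q.2 := by
    have h4 : p.2 ^ 2 = q.2 ^ 2 := by nlinarith
    calc p.2 = Real.sqrt (p.2 ^ 2) := (Real.sqrt_sq hp.1.le).symm
    _ = Real.sqrt (q.2 ^ 2) := by rw [h4]
    _ = q.2 := Real.sqrt_sq hq.1.le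
  exact Prod.ext hx hy

lemma image_Psi {a s : ℝ} (ha : 0 < a) (hs : 0 < s) : Psi a '' U a s = T a s := by
  apply Set.Subset.antisymm
  · rintro _ ⟨p, hp, rfl⟩
    rw [mem_U] at hp
    obtain ⟨hy, hu1, hu2⟩ := hp
    set r1 := Real.sqrt (p.1 ^ 2 + p.2 ^ 2) with hr1def
    set r2 := Real.sqrt ((p.1 - a) ^ 2 + p.2 ^ 2) with hr2def
    have hr1sq : r1 ^ 2 = p.1 ^ 2 + p.2 ^ 2 := Real.sq_sqrt (by positivity)
    have hr2sq : r2 ^ 2 = (p.1 - a) ^ 2 + p.2 ^ 2 := Real.sq_sqrt (by positivity)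
    have hr1pos : 0 < r1 := Real.sqrt_pos.mpr (by positivity)
    have hr2pos : 0 < r2 := Real.sqrt_pos.mpr (by positivity)
    have hXlt : |p.1 * (p.1 - a) + p.2 ^ 2| < r1 * r2 := by
      apply lt_of_pow_lt_pow_left₀ 2 (by positivity)
      rw [sq_abs]
      have hid : (r1 * r2) ^ 2 = (p.1 * (p.1 - a) + p.2 ^ 2) ^ 2 + a ^ 2 * p.2 ^ 2 := by
        rw [mul_pow, hr1sq, hr2sq]
        ring
      nlinarith [mul_pos (mul_pos ha ha) (mul_pos hy hy)]
    rw [abs_lt] at hXlt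
    have hs1 : s < r1 := by
      have : Real.sqrt (s ^ 2) < r1 := Real.sqrt_lt_sqrt (by positivity) hu1
      rwa [Real.sqrt_sq hs.le] at this
    have hs2 : s < r2 := by
      have : Real.sqrt (s ^ 2) < r2 := Real.sqrt_lt_sqrt (by positivity) hu2
      rwa [Real.sqrt_sq hs.le] at this
    rw [mem_T]
    simp only [Psi]
    refine ⟨hs1, hs2, ?_, ?_⟩
    · apply lt_of_pow_lt_pow_left₀ 2 ha.le
      rw [sq_abs]
      nlinarith [hXlt.2, hr1sq, hr2sq]
    · apply lt_of_pow_lt_pow_left₀ 2 (by positivity)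
      nlinarith [hXlt.1, hr1sq, hr2sq]
  · intro q hq
    rw [mem_T] at hq
    obtain ⟨h1, h2, h3, h4⟩ := hq
    rw [abs_lt] at h3
    have hq1 : 0 < q.1 := hs.trans h1
    have hq2 : 0 < q.2 := hs.trans h2
    set z := (q.1 ^ 2 - q.2 ^ 2 + a ^ 2) / (2 * a) with hz
    have hzz : 0 < q.1 ^ 2 - z ^ 2 := by
      have hfact : q.1 ^ 2 - z ^ 2
          = ((q.1 + a) ^ 2 - q.2 ^ 2) * (q.2 ^ 2 - (q.1 - a) ^ 2) / (4 * a ^ 2) := by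
        rw [hz]
        field_simp
        ring
      rw [hfact]
      have f1 : 0 < (q.1 + a) ^ 2 - q.2 ^ 2 := by nlinarith
      have f2 : 0 < q.2 ^ 2 - (q.1 - a) ^ 2 := by nlinarith
      positivity
    set ρ := Real.sqrt (q.1 ^ 2 - z ^ 2) with hρ
    have hρpos : 0 < ρ := Real.sqrt_pos.mpr hzz
    have hρsq : ρ ^ 2 = q.1 ^ 2 - z ^ 2 := Real.sq_sqrt hzz.le
    have hu1 : z ^ 2 + ρ ^ 2 = q.1 ^ 2 := by rw [hρsq]; ring
    have hu2 : (z - a) ^ 2 + ρ ^ 2 = q.2 ^ 2 := by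
      rw [hρsq, hz]
      field_simp
      ring
    refine ⟨(z, ρ), ?_, ?_⟩
    · rw [mem_U]
      refine ⟨hρpos, ?_, ?_⟩
      · simp only
        rw [hu1]
        exact pow_lt_pow_left₀ h1 hs.le (by norm_num)
      · simp only
        rw [hu2]
        exact pow_lt_pow_left₀ h2 hs.le (by norm_num)
    · simp only [Psi]
      rw [hu1, hu2, Real.sqrt_sq hq1.le, Real.sqrt_sq hq2.le]

lemma lintegral_T_eq_U {a s : ℝ} (ha : 0 < a) (hs : 0 < s) :
    ∫⁻ q in T a s, ENNReal.ofReal (a⁻¹ * (q.1 ^ 2 * q.2 ^ 2)⁻¹)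
      = ∫⁻ p in U a s, ENNReal.ofReal (p.2 / (Real.sqrt (p.1 ^ 2 + p.2 ^ 2) ^ 3
          * Real.sqrt ((p.1 - a) ^ 2 + p.2 ^ 2) ^ 3)) := by
  rw [← image_Psi ha hs,
    lintegral_image_eq_lintegral_abs_det_fderiv_mul volume (isOpen_U a s).measurableSet
      (fun p hp => by
        rw [mem_U] at hp
        exact (hasFDerivAt_Psi ((pow_pos hs 2).trans hp.2.1).ne'
          ((pow_pos hs 2).trans hp.2.2).ne').hasFDerivWithinAt)
      (injOn_Psi ha hs)]
  apply setLIntegral_congr_fun_ae (isOpen_U a s).measurableSet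
  apply Filter.Eventually.of_forall
  intro p hp
  rw [mem_U] at hp
  obtain ⟨hy, hu1, hu2⟩ := hp
  rw [psiD_det, ← ENNReal.ofReal_mul (abs_nonneg _)]
  congr 1
  simp only [Psi]
  set r1 := Real.sqrt (p.1 ^ 2 + p.2 ^ 2) with hr1def
  set r2 := Real.sqrt ((p.1 - a) ^ 2 + p.2 ^ 2) with hr2def
  have hr1pos : 0 < r1 := Real.sqrt_pos.mpr (lt_of_le_of_lt (by positivity) hu1)
  have hr2pos : 0 < r2 := Real.sqrt_pos.mpr (lt_of_le_of_lt (by positivity) hu2)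
  have hdet : p.1 * p.2 / (r1 * r2) - p.2 * (p.1 - a) / (r1 * r2) = a * p.2 / (r1 * r2) := by
    field_simp
    ring
  rw [hdet, abs_of_pos (by positivity)]
  field_simp

end PFaux

namespace PFaux

abbrev E3' : Type := EuclideanSpace ℝ (Fin 3)

/-- Build the point of `ℝ³` with coordinates `(z, x, y)`. -/
def toE3 (v : ℝ × (ℝ × ℝ)) : E3' :=
  ((MeasurableEquiv.toLp 2 (Fin 3 → ℝ)).symm).symm ((0 : Fin 3).insertNth v.1 ![v.2.1, v.2.2])

lemma toE3_apply (v : ℝ × (ℝ × ℝ)) :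
    ∀ i : Fin 3, toE3 v i = ![v.1, v.2.1, v.2.2] i := by
  intro i
  have hco : ∀ w : Fin 3 → ℝ, (((MeasurableEquiv.toLp 2 (Fin 3 → ℝ)).symm).symm w : E3') i = w i := by
    intro w
    rfl
  rw [toE3, hco]
  fin_cases i <;> rfl

lemma norm_toE3 (v : ℝ × (ℝ × ℝ)) :
    ‖toE3 v‖ = Real.sqrt (v.1 ^ 2 + (v.2.1 ^ 2 + v.2.2 ^ 2)) := by
  rw [EuclideanSpace.norm_eq]
  congr 1
  rw [Fin.sum_univ_three, toE3_apply v 0, toE3_apply v 1, toE3_apply v 2]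
  simp [Real.norm_eq_abs, sq_abs]
  ring

lemma toE3_sub_single (v : ℝ × (ℝ × ℝ)) (a : ℝ) :
    toE3 v - EuclideanSpace.single (0 : Fin 3) a = toE3 (v.1 - a, v.2) := by
  ext i
  have h1 := toE3_apply v i
  have h2 := toE3_apply (v.1 - a, v.2) i
  rw [PiLp.sub_apply, h1, h2, EuclideanSpace.single_apply]
  fin_cases i <;> simp

/-- The full measurable equivalence `(z,(x,y)) ↦ y₁ + L (z,x,y)`. -/
def PhiEq (y₁ : E3') (L : E3' ≃ₗᵢ[ℝ] E3') : (ℝ × (ℝ × ℝ)) ≃ᵐ E3' :=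
  (((MeasurableEquiv.refl ℝ).prodCongr (MeasurableEquiv.finTwoArrow).symm).trans
    ((MeasurableEquiv.piFinSuccAbove (fun _ : Fin 3 => ℝ) 0).symm)).trans
  ((((MeasurableEquiv.toLp 2 (Fin 3 → ℝ)).symm).symm).trans
    ((L.toHomeomorph.toMeasurableEquiv).trans (Homeomorph.addLeft y₁).toMeasurableEquiv))

lemma PhiEq_apply (y₁ : E3') (L : E3' ≃ₗᵢ[ℝ] E3') (v : ℝ × (ℝ × ℝ)) :
    PhiEq y₁ L v = y₁ + L (toE3 v) := by
  simp only [PhiEq, MeasurableEquiv.trans_apply, Homeomorph.toMeasurableEquiv_coe,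
    LinearIsometryEquiv.coe_toHomeomorph, Homeomorph.coe_addLeft, toE3]
  congr 3

lemma measurePreserving_PhiEq (y₁ : E3') (L : E3' ≃ₗᵢ[ℝ] E3') :
    MeasurePreserving (PhiEq y₁ L) volume volume := by
  have hA : MeasurePreserving
      (Prod.map (id : ℝ → ℝ) ⇑(MeasurableEquiv.finTwoArrow (α := ℝ)).symm) volume volume :=
    (MeasurePreserving.id volume).prod (volume_preserving_finTwoArrow ℝ).symm
  have hB := (volume_preserving_piFinSuccAbove (fun _ : Fin 3 => ℝ) 0).symm
  have hC := (EuclideanSpace.volume_preserving_symm_measurableEquiv_toLp (Fin 3)).symm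
  have hD : MeasurePreserving (fun x : E3' => y₁ + L x) volume volume :=
    (measurePreserving_add_left volume y₁).comp L.measurePreserving
  exact (((hD.comp hC).comp hB).comp hA : MeasurePreserving _ volume volume)

end PFaux

namespace PFaux

/-- The region in `(z,(x,y))` coordinates. -/
def Omg (a s : ℝ) : Set (ℝ × (ℝ × ℝ)) :=
  {v | s ^ 2 < v.1 ^ 2 + (v.2.1 ^ 2 + v.2.2 ^ 2)}
    ∩ {v | s ^ 2 < (v.1 - a) ^ 2 + (v.2.1 ^ 2 + v.2.2 ^ 2)}

lemma mem_Omg {a s : ℝ} {v : ℝ × (ℝ × ℝ)} :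
    v ∈ Omg a s ↔ s ^ 2 < v.1 ^ 2 + (v.2.1 ^ 2 + v.2.2 ^ 2)
      ∧ s ^ 2 < (v.1 - a) ^ 2 + (v.2.1 ^ 2 + v.2.2 ^ 2) := Iff.rfl

lemma isOpen_Omg (a s : ℝ) : IsOpen (Omg a s) :=
  (isOpen_lt continuous_const (by fun_prop)).inter (isOpen_lt continuous_const (by fun_prop))

/-- The integrand in `(z,(x,y))` coordinates. -/
def G3 (a : ℝ) (v : ℝ × (ℝ × ℝ)) : ENNReal :=
  ENNReal.ofReal (1 / (Real.sqrt (v.1 ^ 2 + (v.2.1 ^ 2 + v.2.2 ^ 2)) ^ 3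
    * Real.sqrt ((v.1 - a) ^ 2 + (v.2.1 ^ 2 + v.2.2 ^ 2)) ^ 3))

lemma measurable_G3 (a : ℝ) : Measurable (G3 a) := by
  apply Measurable.ennreal_ofReal
  apply Measurable.div measurable_const
  fun_prop

lemma lintegral_E1 {y₁ y₂ : E3'} (hy : y₁ ≠ y₂) {s : ℝ} (hs : 0 < s) :
    ∫⁻ x in (Metric.closedBall y₁ s ∪ Metric.closedBall y₂ s)ᶜ,
        ENNReal.ofReal (1 / (‖x - y₁‖ ^ 3 * ‖x - y₂‖ ^ 3))
      = ∫⁻ v in Omg ‖y₁ - y₂‖ s, G3 ‖y₁ - y₂‖ v := by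
  set a := ‖y₁ - y₂‖ with hadef
  have ha : 0 < a := norm_pos_iff.mpr (sub_ne_zero.mpr hy)
  set c : E3' := EuclideanSpace.single (0 : Fin 3) a with hcdef
  have hc : ‖c‖ = ‖y₂ - y₁‖ := by
    rw [hcdef, EuclideanSpace.norm_single, Real.norm_eq_abs, abs_of_pos ha, hadef, norm_sub_rev]
  set L := Submodule.reflection (ℝ ∙ (c - (y₂ - y₁)))ᗮ with hLdef
  have hL : L c = y₂ - y₁ := Submodule.reflection_sub hc
  have hn1 : ∀ v : ℝ × (ℝ × ℝ),
      ‖PhiEq y₁ L v - y₁‖ = Real.sqrt (v.1 ^ 2 + (v.2.1 ^ 2 + v.2.2 ^ 2)) := by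
    intro v
    rw [PhiEq_apply, add_sub_cancel_left, L.norm_map, norm_toE3]
  have hn2 : ∀ v : ℝ × (ℝ × ℝ),
      ‖PhiEq y₁ L v - y₂‖ = Real.sqrt ((v.1 - a) ^ 2 + (v.2.1 ^ 2 + v.2.2 ^ 2)) := by
    intro v
    rw [PhiEq_apply]
    have e : y₁ + L (toE3 v) - y₂ = L (toE3 v - c) := by
      rw [L.map_sub, hL]
      abel
    rw [e, L.norm_map, toE3_sub_single, norm_toE3]
  have hpre : (PhiEq y₁ L) ⁻¹' ((Metric.closedBall y₁ s ∪ Metric.closedBall y₂ s)ᶜ)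
      = Omg a s := by
    ext v
    simp only [Set.mem_preimage, Set.mem_compl_iff, Set.mem_union, Metric.mem_closedBall,
      not_or, not_le, dist_eq_norm, mem_Omg]
    rw [hn1 v, hn2 v, ← Real.lt_sqrt hs.le, ← Real.lt_sqrt hs.le]
  rw [← (measurePreserving_PhiEq y₁ L).setLIntegral_comp_preimage_emb
    (PhiEq y₁ L).measurableEmbedding, hpre]
  apply setLIntegral_congr_fun_ae (isOpen_Omg a s).measurableSet
  apply Filter.Eventually.of_forall
  intro v _
  rw [G3, hn1 v, hn2 v]

/-- The `(z, ρ)` sliced integrand. -/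
def K2 (a s z : ℝ) (ρ : ℝ) : ENNReal :=
  if s ^ 2 < z ^ 2 + ρ ^ 2 ∧ s ^ 2 < (z - a) ^ 2 + ρ ^ 2 then
    ENNReal.ofReal (ρ / (Real.sqrt (z ^ 2 + ρ ^ 2) ^ 3 * Real.sqrt ((z - a) ^ 2 + ρ ^ 2) ^ 3))
  else 0

lemma measurable_K2 (a s z : ℝ) : Measurable (K2 a s z) := by
  unfold K2
  apply Measurable.ite
  · apply MeasurableSet.inter
    · exact measurableSet_lt measurable_const
        ((by fun_prop : Measurable fun ρ : ℝ => z ^ 2 + ρ ^ 2))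
    · exact measurableSet_lt measurable_const
        ((by fun_prop : Measurable fun ρ : ℝ => (z - a) ^ 2 + ρ ^ 2))
  · apply Measurable.ennreal_ofReal
    exact (measurable_id.div
      ((by fun_prop : Measurable fun ρ : ℝ => Real.sqrt (z ^ 2 + ρ ^ 2) ^ 3
        * Real.sqrt ((z - a) ^ 2 + ρ ^ 2) ^ 3)))
  · exact measurable_const

def g2 (a : ℝ) (p : ℝ × ℝ) : ENNReal :=
  ENNReal.ofReal (p.2 / (Real.sqrt (p.1 ^ 2 + p.2 ^ 2) ^ 3
    * Real.sqrt ((p.1 - a) ^ 2 + p.2 ^ 2) ^ 3))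

lemma measurable_g2 (a : ℝ) : Measurable (g2 a) :=
  Measurable.ennreal_ofReal (Measurable.div (by fun_prop) (by fun_prop))

lemma lintegral_E2 {a s : ℝ} (hs : 0 < s) :
    ∫⁻ v in Omg a s, G3 a v = ENNReal.ofReal (2 * π) * ∫⁻ p in U a s, g2 a p := by
  rw [← lintegral_indicator (isOpen_Omg a s).measurableSet]
  rw [Measure.volume_eq_prod,
    lintegral_prod _ (((measurable_G3 a).indicator (isOpen_Omg a s).measurableSet).aemeasurable)]
  have inner : ∀ z : ℝ, ∫⁻ p : ℝ × ℝ, (Omg a s).indicator (G3 a) (z, p)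
      = (∫⁻ ρ in Ioi (0:ℝ), K2 a s z ρ) * ENNReal.ofReal (2 * π) := by
    intro z
    rw [← lintegral_comp_polarCoord_symm (fun p => (Omg a s).indicator (G3 a) (z, p))]
    have congrpt : ∀ q ∈ polarCoord.target,
        ENNReal.ofReal q.1 * (Omg a s).indicator (G3 a) (z, polarCoord.symm q)
          = K2 a s z q.1 := by
      rintro ⟨ρ, θ⟩ hq
      rw [polarCoord_target] at hq
      obtain ⟨hρ, _⟩ := hq
      rw [Set.mem_Ioi] at hρ
      have hsymm : (polarCoord.symm (ρ, θ)).1 ^ 2 + (polarCoord.symm (ρ, θ)).2 ^ 2 = ρ ^ 2 := by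
        simp only [polarCoord_symm_apply]
        have := Real.sin_sq_add_cos_sq θ
        nlinarith [this]
      by_cases hcond : s ^ 2 < z ^ 2 + ρ ^ 2 ∧ s ^ 2 < (z - a) ^ 2 + ρ ^ 2
      · have hmem : (z, polarCoord.symm (ρ, θ)) ∈ Omg a s := by
          rw [mem_Omg]
          simp only
          rw [hsymm]
          exact hcond
        rw [Set.indicator_of_mem hmem, K2, if_pos hcond, G3]
        simp only
        rw [hsymm, ← ENNReal.ofReal_mul hρ.le]
        congr 1
        field_simp
      · have hmem : (z, polarCoord.symm (ρ, θ)) ∉ Omg a s := by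
          rw [mem_Omg]
          simp only
          rw [hsymm]
          exact hcond
        rw [Set.indicator_of_notMem hmem, K2, if_neg hcond, mul_zero]
    rw [setLIntegral_congr_fun_ae polarCoord.open_target.measurableSet
      (Filter.Eventually.of_forall congrpt)]
    rw [polarCoord_target, Measure.volume_eq_prod, ← Measure.prod_restrict]
    have hKm : AEMeasurable (fun x : ℝ × ℝ => K2 a s z x.1)
        ((volume.restrict (Ioi (0:ℝ))).prod (volume.restrict (Ioo (-π) π))) :=
      ((measurable_K2 a s z).comp measurable_fst).aemeasurable
    rw [lintegral_prod _ hKm]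
    have hconst : ∀ ρ : ℝ, ∫⁻ _ in Ioo (-π) π, K2 a s z ρ = K2 a s z ρ * ENNReal.ofReal (2 * π) := by
      intro ρ
      rw [setLIntegral_const, Real.volume_Ioo, show π - -π = 2 * π by ring]
    calc ∫⁻ ρ in Ioi (0:ℝ), ∫⁻ _ in Ioo (-π) π, K2 a s z ρ
        = ∫⁻ ρ in Ioi (0:ℝ), K2 a s z ρ * ENNReal.ofReal (2 * π) := by
          exact lintegral_congr fun ρ => hconst ρ
      _ = (∫⁻ ρ in Ioi (0:ℝ), K2 a s z ρ) * ENNReal.ofReal (2 * π) :=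
          lintegral_mul_const' _ _ ENNReal.ofReal_ne_top
  rw [lintegral_congr inner, lintegral_mul_const' _ _ ENNReal.ofReal_ne_top, mul_comm]
  congr 1
  have hjoint : ∀ v : ℝ × ℝ, (Ioi (0:ℝ)).indicator (K2 a s v.1) v.2
      = (U a s).indicator (g2 a) v := by
    intro v
    by_cases hv : 0 < v.2
    · rw [Set.indicator_of_mem (Set.mem_Ioi.mpr hv)]
      by_cases hcond : s ^ 2 < v.1 ^ 2 + v.2 ^ 2 ∧ s ^ 2 < (v.1 - a) ^ 2 + v.2 ^ 2
      · have hmem : v ∈ U a s := mem_U.mpr ⟨hv, hcond.1, hcond.2⟩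
        rw [Set.indicator_of_mem hmem, K2, if_pos hcond, g2]
      · have hmem : v ∉ U a s := by
          rw [mem_U]
          rintro ⟨_, h1, h2⟩
          exact hcond ⟨h1, h2⟩
        rw [Set.indicator_of_notMem hmem, K2, if_neg hcond]
    · rw [Set.indicator_of_notMem (by simpa using hv)]
      have hmem : v ∉ U a s := by
        rw [mem_U]
        rintro ⟨h, _, _⟩
        exact hv h
      rw [Set.indicator_of_notMem hmem]
  calc ∫⁻ z, ∫⁻ ρ in Ioi (0:ℝ), K2 a s z ρ
      = ∫⁻ z, ∫⁻ ρ, (Ioi (0:ℝ)).indicator (K2 a s z) ρ := by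
        apply lintegral_congr
        intro z
        rw [lintegral_indicator measurableSet_Ioi]
    _ = ∫⁻ z, ∫⁻ ρ, (U a s).indicator (g2 a) (z, ρ) := by
        apply lintegral_congr
        intro z
        apply lintegral_congr
        intro ρ
        exact hjoint (z, ρ)
    _ = ∫⁻ p : ℝ × ℝ, (U a s).indicator (g2 a) p := by
        rw [Measure.volume_eq_prod,
          lintegral_prod _ (((measurable_g2 a).indicator
            (isOpen_U a s).measurableSet).aemeasurable)]
    _ = ∫⁻ p in U a s, g2 a p := lintegral_indicator (isOpen_U a s).measurableSet _

end PFaux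

namespace PFaux

def Kval (a s : ℝ) : ℝ :=
  (3 * log (a - s) - log (2 * a - s) + log (a + s)) / a ^ 2
    + 2 * ((a - s) * (a + s))⁻¹ + ((a * (a + s))⁻¹ - (a * (a - s))⁻¹)
    + (log (a + s) - log (a - s) - log (2 * a + s) + log (2 * a - s)) / a ^ 2
    - 2 * (a * (a + s))⁻¹ + log (2 * a + s) / a ^ 2

lemma Jval_eq_Kval {a s : ℝ} (ha : 0 < a) (hs : 0 < s) (hsa : s < a / 2) :
    Jval a s = Kval a s - 4 * log s / a ^ 2 := by
  have h1 : a - s ≠ 0 := by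
    have : 0 < a - s := by linarith
    linarith
  have h2 : a + s ≠ 0 := by positivity
  have ha' : a ≠ 0 := ha.ne'
  have hs' : s ≠ 0 := hs.ne'
  unfold Jval Kval
  field_simp
  ring

lemma tendsto_Kval {a : ℝ} (ha : 0 < a) :
    Tendsto (fun s => Kval a s) (𝓝 0) (𝓝 (4 * log a / a ^ 2)) := by
  have hK : ContinuousAt (fun s => Kval a s) 0 := by
    have hlog : ∀ b : ℝ, b ≠ 0 → ∀ c : ℝ, ContinuousAt (fun s : ℝ => log (b + c * s)) 0 := by
      intro b hb c
      apply ContinuousAt.comp (x := (0:ℝ)) (g := Real.log)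
      · simpa using Real.continuousAt_log (by simpa using hb)
      · fun_prop
    have l1 : ContinuousAt (fun s : ℝ => log (a - s)) 0 := by
      have := hlog a ha.ne' (-1)
      simpa [sub_eq_add_neg, neg_one_mul] using this
    have l2 : ContinuousAt (fun s : ℝ => log (a + s)) 0 := by
      have := hlog a ha.ne' 1
      simpa using this
    have l3 : ContinuousAt (fun s : ℝ => log (2 * a - s)) 0 := by
      have := hlog (2 * a) (by positivity) (-1)
      simpa [sub_eq_add_neg, neg_one_mul] using this
    have l4 : ContinuousAt (fun s : ℝ => log (2 * a + s)) 0 := by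
      have := hlog (2 * a) (by positivity) 1
      simpa using this
    have i1 : ContinuousAt (fun s : ℝ => ((a - s) * (a + s))⁻¹) 0 := by
      apply ContinuousAt.inv₀ (by fun_prop)
      simp only [sub_zero, add_zero]
      positivity
    have i2 : ContinuousAt (fun s : ℝ => (a * (a + s))⁻¹) 0 := by
      apply ContinuousAt.inv₀ (by fun_prop)
      simp only [add_zero]
      positivity
    have i3 : ContinuousAt (fun s : ℝ => (a * (a - s))⁻¹) 0 := by
      apply ContinuousAt.inv₀ (by fun_prop)
      simp only [sub_zero]
      positivity
    unfold Kval
    exact ((((((l1.const_mul 3).sub l3).add l2).div_const _).add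
        (i1.const_mul 2)).add (i2.sub i3)).add
        ((((l2.sub l1).sub l4).add l3).div_const _) |>.sub (i2.const_mul 2) |>.add
        (l4.div_const _)
  have := hK.tendsto
  convert this using 2
  unfold Kval
  simp only [sub_zero, add_zero, mul_zero]
  have hlog2 : log (2 * a) = log (2 * a) := rfl
  field_simp
  ring

lemma tendsto_final {a s₁ s₂ : ℝ} (ha : 0 < a) (hs₁ : 0 < s₁) (hs₂ : 0 < s₂) :
    Tendsto (fun s => 2 * π / a * Jval a s + 4 * π / a ^ 3 * log (s / s₁)
        + 4 * π / a ^ 3 * log (s / s₂)) (𝓝[>] (0:ℝ))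
      (𝓝 (4 * π / a ^ 3 * (log (a / s₁) + log (a / s₂)))) := by
  set G : ℝ → ℝ := fun s =>
    2 * π / a * Kval a s - 4 * π / a ^ 3 * (log s₁ + log s₂) with hG
  have hGlim : Tendsto G (𝓝[>] (0:ℝ)) (𝓝 (4 * π / a ^ 3 * (log (a / s₁) + log (a / s₂)))) := by
    have h1 : Tendsto G (𝓝 (0:ℝ))
        (𝓝 (2 * π / a * (4 * log a / a ^ 2) - 4 * π / a ^ 3 * (log s₁ + log s₂))) := by
      exact ((tendsto_Kval ha).const_mul _).sub_const _
    have h2 : 2 * π / a * (4 * log a / a ^ 2) - 4 * π / a ^ 3 * (log s₁ + log s₂)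
        = 4 * π / a ^ 3 * (log (a / s₁) + log (a / s₂)) := by
      rw [Real.log_div ha.ne' hs₁.ne', Real.log_div ha.ne' hs₂.ne']
      field_simp
      ring
    rw [h2] at h1
    exact h1.mono_left nhdsWithin_le_nhds
  apply hGlim.congr'
  filter_upwards [Ioo_mem_nhdsGT_of_mem (Set.mem_Ico.2 ⟨le_refl (0:ℝ), half_pos ha⟩)] with s hsm
  obtain ⟨hs, hsa⟩ := hsm
  rw [hG]
  rw [Jval_eq_Kval ha hs hsa, Real.log_div hs.ne' hs₁.ne', Real.log_div hs.ne' hs₂.ne']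
  field_simp
  ring

end PFaux


namespace PFaux

lemma main_integral_value {y₁ y₂ : E3'} (hy : y₁ ≠ y₂) {s : ℝ} (hs : 0 < s)
    (hsa : s < ‖y₁ - y₂‖ / 2) :
    ∫ x in (Metric.closedBall y₁ s ∪ Metric.closedBall y₂ s)ᶜ,
        1 / (‖x - y₁‖ ^ 3 * ‖x - y₂‖ ^ 3)
      = 2 * π / ‖y₁ - y₂‖ * Jval ‖y₁ - y₂‖ s := by
  set a := ‖y₁ - y₂‖ with hadef
  have ha : 0 < a := norm_pos_iff.mpr (sub_ne_zero.mpr hy)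
  have hTint : IntegrableOn (fun q : ℝ × ℝ => (q.1 ^ 2 * q.2 ^ 2)⁻¹) (T a s) :=
    integrableOn_T hs
  have hTval := integral_T_value ha hs hsa
  have hJnn : 0 ≤ Jval a s := by
    rw [← hTval]
    apply setIntegral_nonneg (measurableSet_T a s)
    intro q _
    positivity
  have hL1 : ∫⁻ q in T a s, ENNReal.ofReal ((q.1 ^ 2 * q.2 ^ 2)⁻¹)
      = ENNReal.ofReal (Jval a s) := by
    rw [← ofReal_integral_eq_lintegral_ofReal hTint ?_, hTval]
    apply Filter.Eventually.of_forall
    intro q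
    positivity
  have hL2 : ∫⁻ q in T a s, ENNReal.ofReal (a⁻¹ * (q.1 ^ 2 * q.2 ^ 2)⁻¹)
      = ENNReal.ofReal a⁻¹ * ENNReal.ofReal (Jval a s) := by
    calc ∫⁻ q in T a s, ENNReal.ofReal (a⁻¹ * (q.1 ^ 2 * q.2 ^ 2)⁻¹)
        = ∫⁻ q in T a s, ENNReal.ofReal a⁻¹ * ENNReal.ofReal ((q.1 ^ 2 * q.2 ^ 2)⁻¹) := by
          apply lintegral_congr
          intro q
          rw [ENNReal.ofReal_mul (by positivity)]
      _ = ENNReal.ofReal a⁻¹ * ∫⁻ q in T a s, ENNReal.ofReal ((q.1 ^ 2 * q.2 ^ 2)⁻¹) :=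
          lintegral_const_mul' _ _ ENNReal.ofReal_ne_top
      _ = ENNReal.ofReal a⁻¹ * ENNReal.ofReal (Jval a s) := by rw [hL1]
  have hUg : ∫⁻ p in U a s, g2 a p
      = ∫⁻ q in T a s, ENNReal.ofReal (a⁻¹ * (q.1 ^ 2 * q.2 ^ 2)⁻¹) := by
    rw [lintegral_T_eq_U ha hs]
    rfl
  have chain : ∫⁻ x in (Metric.closedBall y₁ s ∪ Metric.closedBall y₂ s)ᶜ,
      ENNReal.ofReal (1 / (‖x - y₁‖ ^ 3 * ‖x - y₂‖ ^ 3))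
      = ENNReal.ofReal (2 * π) * (ENNReal.ofReal a⁻¹ * ENNReal.ofReal (Jval a s)) := by
    rw [lintegral_E1 hy hs, lintegral_E2 hs, hUg, hL2]
  have hfm : Measurable fun x : E3' => ‖x - y₁‖ ^ 3 * ‖x - y₂‖ ^ 3 := by fun_prop
  rw [MeasureTheory.integral_eq_lintegral_of_nonneg_ae (f := fun x => 1 / (‖x - y₁‖ ^ 3 * ‖x - y₂‖ ^ 3))
    (Filter.Eventually.of_forall (fun x => by positivity))
    (Measurable.aestronglyMeasurable (measurable_const.div hfm))]
  have hnn : (0:ℝ) ≤ 2 * π * (a⁻¹ * Jval a s) :=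
    mul_nonneg (by positivity) (mul_nonneg (inv_nonneg.mpr ha.le) hJnn)
  rw [chain, ← ENNReal.ofReal_mul (by positivity : (0:ℝ) ≤ a⁻¹),
    ← ENNReal.ofReal_mul (by positivity : (0:ℝ) ≤ 2 * π), ENNReal.toReal_ofReal hnn]
  field_simp

end PFaux

end PFauxSection


/-- explicit partie-finie integral:
`Pf_{s₁,s₂} ∫ d³x/(r₁³r₂³) = (4π/r₁₂³)[ln(r₁₂/s₁) + ln(r₁₂/s₂)]`. -/
theorem pf_integral_inv_r13_r23
    (y₁ y₂ : E3) (hy : y₁ ≠ y₂) (s₁ s₂ : ℝ) (hs₁ : 0 < s₁) (hs₂ : 0 < s₂) :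
    Tendsto
      (fun s : ℝ =>
        (∫ x in (Metric.closedBall y₁ s ∪ Metric.closedBall y₂ s)ᶜ,
            1 / (‖x - y₁‖ ^ 3 * ‖x - y₂‖ ^ 3))
          + 4 * π / ‖y₁ - y₂‖ ^ 3 * Real.log (s / s₁)
          + 4 * π / ‖y₁ - y₂‖ ^ 3 * Real.log (s / s₂))
      (𝓝[>] (0 : ℝ))
      (𝓝 (4 * π / ‖y₁ - y₂‖ ^ 3 *
        (Real.log (‖y₁ - y₂‖ / s₁) + Real.log (‖y₁ - y₂‖ / s₂)))) := by
  have ha : 0 < ‖y₁ - y₂‖ := norm_pos_iff.mpr (sub_ne_zero.mpr hy)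
  have key := PFaux.tendsto_final (a := ‖y₁ - y₂‖) ha hs₁ hs₂
  apply key.congr'
  filter_upwards [Ioo_mem_nhdsGT_of_mem
    (Set.mem_Ico.2 ⟨le_refl (0:ℝ), half_pos ha⟩)] with s hsm
  obtain ⟨hs, hsa⟩ := hsm
  rw [PFaux.main_integral_value hy hs hsa]


end
end

section
/- (Action of Pf(Fδ) on smooth functions.) Let F be smooth on a punctured neighbourhood of y ∈ ℝ³ and admit a singular expansion at y whose exponents are integers a ≥ a₀ for some a₀ ∈ ℤ, a₀ ≤ 0, with coefficients (f_a), and let φ : ℝ³ → ℝ be C^∞. Then Fφ admits a singular expansion at y and its Hadamard partie finie at y is the finite sum (Fφ)_y = Σ_{l=0}^{−a₀} (1/l!) Σ_{i₁,…,i_l ∈ {1,2,3}} ∂_{i₁}⋯∂_{i_l}φ(y) · (1/4π) ∫_{S²} n^{i₁}⋯n^{i_l} f_{−l}(n) dΩ(n). -/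
open MeasureTheory Filter Topology Real Asymptotics

noncomputable section

section TaylorAux
open Set


lemma iterDW_eq_iterD {h : ℝ → ℝ} (hh : ContDiff ℝ (⊤ : ℕ∞) h) {s : Set ℝ}
    (hs : UniqueDiffOn ℝ s) (k : ℕ) : ∀ x ∈ s, iteratedDerivWithin k h s x = iteratedDeriv k h x := by
  induction k with
  | zero => intro x hx; simp
  | succ k IH =>
    intro x hx
    rw [iteratedDerivWithin_succ, iteratedDeriv_succ,
      derivWithin_congr IH (IH x hx),
      (hh.differentiable_iteratedDeriv k (by exact_mod_cast ENat.coe_lt_top k)).differentiableAt.derivWithin (hs x hx)]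


lemma lineDeriv_iter (φ : E3 → ℝ) (hφ : ContDiff ℝ (⊤ : ℕ∞) φ) (y v : E3) (l : ℕ) :
    iteratedDeriv l (fun t : ℝ => φ (y + t • v)) = fun t =>
      iteratedFDeriv ℝ l φ (y + t • v) (fun _ => v) := by
  induction l with
  | zero => ext t; simp [iteratedDeriv_zero]
  | succ l IH =>
    rw [iteratedDeriv_succ, IH]
    ext t
    set p := y + t • v with hp
    have hγ : HasDerivAt (fun t : ℝ => y + t • v) v t := by
      simpa using ((hasDerivAt_id t).smul_const v).const_add y
    have hdiff : Differentiable ℝ (iteratedFDeriv ℝ l φ) :=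
      hφ.differentiable_iteratedFDeriv (by exact_mod_cast ENat.coe_lt_top l)
    have hD : HasFDerivAt (iteratedFDeriv ℝ l φ)
        (fderiv ℝ (iteratedFDeriv ℝ l φ) p) p := (hdiff p).hasFDerivAt
    have hG : HasFDerivAt (fun x => iteratedFDeriv ℝ l φ x (fun _ : Fin l => v))
        ((ContinuousMultilinearMap.apply ℝ (fun _ : Fin l => E3) ℝ (fun _ => v)).comp
          (fderiv ℝ (iteratedFDeriv ℝ l φ) p)) p :=
      ((ContinuousMultilinearMap.apply ℝ (fun _ : Fin l => E3) ℝ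
        (fun _ => v)).hasFDerivAt).comp p hD
    have hder := (hG.comp_hasDerivAt t hγ).deriv
    simp only [Function.comp_def] at hder
    rw [hder]
    rw [iteratedFDeriv_succ_apply_left]
    rfl



lemma taylor_line_bound (φ : E3 → ℝ) (hφ : ContDiff ℝ (⊤ : ℕ∞) φ) (y : E3) (M : ℕ) :
    ∃ C : ℝ, 0 ≤ C ∧ ∀ r : ℝ, 0 < r → r ≤ 1 → ∀ v : E3, ‖v‖ = 1 →
      |φ (y + r • v) - ∑ l ∈ Finset.range (M + 1),
          r ^ l * ((l.factorial : ℝ)⁻¹ * iteratedFDeriv ℝ l φ y (fun _ => v))|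
        ≤ C * r ^ (M + 1) := by
  obtain ⟨B, hB⟩ := (IsCompact.exists_bound_of_continuousOn (isCompact_closedBall y 1)
    (hφ.continuous_iteratedFDeriv (by exact_mod_cast le_top : ((M+1:ℕ):WithTop ℕ∞) ≤ ((⊤ : ℕ∞) : WithTop ℕ∞))).continuousOn)
  refine ⟨max B 0 / (M + 1).factorial, by positivity, fun r hr hr1 v hv => ?_⟩
  set h : ℝ → ℝ := fun t => φ (y + t • v) with hhdef
  have hh : ContDiff ℝ (⊤ : ℕ∞) h :=
    hφ.comp (contDiff_const.add (contDiff_id.smul contDiff_const))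
  have hud : UniqueDiffOn ℝ (Icc (0:ℝ) r) := uniqueDiffOn_Icc hr
  have hIccIoo : Ioo (0:ℝ) r ⊆ Icc 0 r := Ioo_subset_Icc_self
  have hlin : ∀ k : ℕ, iteratedDeriv k h = fun t =>
      iteratedFDeriv ℝ k φ (y + t • v) (fun _ => v) := fun k => lineDeriv_iter φ hφ y v k
  have hf : ContDiffOn ℝ M h (Icc 0 r) := (hh.of_le (by exact_mod_cast le_top)).contDiffOn
  have hf' : DifferentiableOn ℝ (iteratedDerivWithin M h (Icc 0 r)) (Ioo 0 r) := by
    refine (((hh.differentiable_iteratedDeriv M (by exact_mod_cast ENat.coe_lt_top M)).differentiableOn)).congr ?_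
    exact fun x hx => iterDW_eq_iterD hh hud M x (hIccIoo hx)
  obtain ⟨x', hx', heq⟩ := taylor_mean_remainder_lagrange (f := h) (x₀ := 0) (x := r) (n := M)
    hr.ne (by rwa [Set.uIcc_of_le hr.le]) (by rwa [Set.uIcc_of_le hr.le, Set.uIoo_of_le hr.le])
  rw [Set.uIcc_of_le hr.le] at heq
  rw [Set.uIoo_of_le hr.le] at hx'
  have htay : taylorWithinEval h M (Icc 0 r) 0 r = ∑ l ∈ Finset.range (M + 1),
      r ^ l * ((l.factorial : ℝ)⁻¹ * iteratedFDeriv ℝ l φ y (fun _ => v)) := by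
    rw [taylor_within_apply]
    refine Finset.sum_congr rfl fun k _ => ?_
    rw [iterDW_eq_iterD hh hud k 0 (by constructor <;> [rfl; exact hr.le]), hlin k]
    simp only [zero_smul, add_zero, sub_zero, smul_eq_mul]
    ring
  have hbd : |iteratedDerivWithin (M + 1) h (Icc 0 r) x'| ≤ max B 0 := by
    rw [iterDW_eq_iterD hh hud (M + 1) x' (hIccIoo hx'), hlin (M + 1)]
    calc |iteratedFDeriv ℝ (M + 1) φ (y + x' • v) (fun _ => v)|
        ≤ ‖iteratedFDeriv ℝ (M + 1) φ (y + x' • v)‖ * ∏ _i : Fin (M + 1), ‖v‖ :=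
          (iteratedFDeriv ℝ (M + 1) φ (y + x' • v)).le_opNorm _
      _ ≤ max B 0 := by
          rw [hv]
          simp only [Finset.prod_const_one, mul_one]
          refine le_trans (hB _ ?_) (le_max_left _ _)
          simp only [Metric.mem_closedBall, dist_self_add_left, norm_smul, hv, mul_one,
            Real.norm_eq_abs]
          rw [abs_of_pos hx'.1]
          exact hx'.2.le.trans hr1
  have : h r = φ (y + r • v) := rfl
  rw [← this, ← htay, heq, abs_div, abs_mul, abs_pow]
  rw [sub_zero, abs_of_pos hr, abs_of_nonneg (by positivity : (0:ℝ) ≤ ((M+1).factorial : ℝ))]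
  rw [div_le_iff₀ (by positivity)]
  have h1 : max B 0 / (M + 1).factorial * r ^ (M + 1) * (M + 1).factorial
      = max B 0 * r ^ (M + 1) := by field_simp
  rw [h1]
  exact mul_le_mul_of_nonneg_right hbd (by positivity)

end TaylorAux

namespace PfAux

/-- Taylor coefficient along direction `n`. -/
def Tcoef (φ : E3 → ℝ) (y : E3) (l : ℕ) (n : S2) : ℝ :=
  (l.factorial : ℝ)⁻¹ * iteratedFDeriv ℝ l φ y (fun _ => (n : E3))

/-- Candidate expansion coefficients of `F·φ`. -/
def pc (c : ℝ → S2 → ℝ) (φ : E3 → ℝ) (y : E3) (b : ℝ) (n : S2) : ℝ :=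
  ∑ᶠ l : ℕ, c (b - l) n * Tcoef φ y l n

variable {c : ℝ → S2 → ℝ} {φ : E3 → ℝ} {y : E3} {m₀ : ℕ}

lemma pc_eq_sum (hzero : ∀ a : ℝ, a < -(m₀ : ℝ) → c a = 0)
    (b : ℝ) (n : S2) {K : ℕ} (hK : b + m₀ ≤ K) :
    pc c φ y b n = ∑ l ∈ Finset.range (K + 1), c (b - l) n * Tcoef φ y l n := by
  apply finsum_eq_sum_of_support_subset
  intro l hl
  simp only [Function.mem_support] at hl
  simp only [Finset.coe_range, Set.mem_Iio, Nat.lt_succ_iff]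
  by_contra hlK
  push_neg at hlK
  have : b - l < -(m₀ : ℝ) := by
    have : (K : ℝ) + 1 ≤ (l : ℝ) := by exact_mod_cast hlK
    linarith
  rw [hzero _ this] at hl
  simp at hl

lemma pc_bddBelow (hzero : ∀ a : ℝ, a < -(m₀ : ℝ) → c a = 0) :
    ∀ b : ℝ, b < -(m₀ : ℝ) → pc c φ y b = 0 := by
  intro b hb
  funext n
  apply finsum_eq_zero_of_forall_eq_zero
  intro l
  have : b - l < -(m₀ : ℝ) := by
    have : (0:ℝ) ≤ l := Nat.cast_nonneg l
    linarith
  rw [hzero _ this]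
  simp

lemma pc_exp_mem (hzero : ∀ a : ℝ, a < -(m₀ : ℝ) → c a = 0)
    {b : ℝ} (hb : pc c φ y b ≠ 0) :
    ∃ a : ℝ, ∃ l : ℕ, c a ≠ 0 ∧ a ≤ b ∧ (l : ℝ) ≤ b + m₀ ∧ b = a + l := by
  have : ∃ n, pc c φ y b n ≠ 0 := by
    by_contra h
    push_neg at h
    exact hb (funext h)
  obtain ⟨n, hn⟩ := this
  have : ∃ l : ℕ, c (b - l) n * Tcoef φ y l n ≠ 0 := by
    by_contra h
    push_neg at h
    exact hn (finsum_eq_zero_of_forall_eq_zero h)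
  obtain ⟨l, hl⟩ := this
  have hc : c (b - l) ≠ 0 := by
    intro h0
    rw [h0] at hl
    simp at hl
  refine ⟨b - l, l, hc, by linarith [Nat.cast_nonneg (α := ℝ) l], ?_, by ring⟩
  by_contra h
  push_neg at h
  exact hc (hzero _ (by linarith))

lemma pc_finite_exponents (hzero : ∀ a : ℝ, a < -(m₀ : ℝ) → c a = 0)
    (hfin : ∀ N : ℝ, {a : ℝ | a ≤ N ∧ c a ≠ 0}.Finite) :
    ∀ N : ℝ, {b : ℝ | b ≤ N ∧ pc c φ y b ≠ 0}.Finite := by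
  intro N
  set K : ℕ := (⌈N⌉.toNat + m₀) with hKdef
  have hNK : N ≤ (⌈N⌉.toNat : ℝ) := by
    rcases le_or_gt 0 ⌈N⌉ with h | h
    · calc N ≤ (⌈N⌉ : ℝ) := Int.le_ceil N
        _ = ((⌈N⌉.toNat : ℤ) : ℝ) := by rw [Int.toNat_of_nonneg h]
        _ = (⌈N⌉.toNat : ℝ) := by push_cast; ring
    · have : N < 0 := by
        by_contra hN
        push_neg at hN
        exact absurd (Int.ceil_nonneg hN) (not_le.mpr h)
      exact this.le.trans (Nat.cast_nonneg _)
  apply Set.Finite.subset (((hfin N).prod (Set.finite_Icc (0:ℕ) K)).image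
    (fun q : ℝ × ℕ => q.1 + q.2))
  rintro b ⟨hbN, hb⟩
  obtain ⟨a, l, hc, hab, hlb, rfl⟩ := pc_exp_mem hzero hb
  refine ⟨(a, l), ⟨⟨by linarith, hc⟩, ?_⟩, rfl⟩
  simp only [Set.mem_Icc]
  refine ⟨Nat.zero_le _, ?_⟩
  have : (l : ℝ) ≤ (K : ℝ) := by
    push_cast [hKdef]
    linarith
  exact_mod_cast this

end PfAux

namespace PfAux

lemma le_ceil_toNat (N : ℝ) : N ≤ (⌈N⌉.toNat : ℝ) := by
  rcases le_or_gt 0 ⌈N⌉ with h | h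
  · calc N ≤ (⌈N⌉ : ℝ) := Int.le_ceil N
      _ = ((⌈N⌉.toNat : ℤ) : ℝ) := by rw [Int.toNat_of_nonneg h]
      _ = (⌈N⌉.toNat : ℝ) := by push_cast; ring
  · have : N < 0 := by
      by_contra hN
      push_neg at hN
      exact absurd (Int.ceil_nonneg hN) (not_le.mpr h)
    exact this.le.trans (Nat.cast_nonneg _)

variable {c : ℝ → S2 → ℝ} {φ : E3 → ℝ} {y : E3} {m₀ : ℕ}

lemma contDiff_diag_iter (hφ : ContDiff ℝ (⊤ : ℕ∞) φ) (l : ℕ) :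
    ContDiff ℝ (⊤ : ℕ∞) (fun x : E3 => iteratedFDeriv ℝ l φ y (fun _ : Fin l => x)) :=
  (iteratedFDeriv ℝ l φ y).contDiff.comp (contDiff_pi.mpr fun _ => contDiff_id)

lemma smoothSphereFn_pc (hc : ∀ a, SmoothSphereFn (c a)) (hφ : ContDiff ℝ (⊤ : ℕ∞) φ)
    (hzero : ∀ a : ℝ, a < -(m₀ : ℝ) → c a = 0) (b : ℝ) :
    SmoothSphereFn (pc c φ y b) := by
  set K : ℕ := ⌈b⌉.toNat + m₀ with hK
  have hbK : b + m₀ ≤ K := by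
    push_cast [hK]
    linarith [le_ceil_toNat b]
  refine ⟨fun x => ∑ l ∈ Finset.range (K + 1),
    (hc (b - l)).choose x * ((l.factorial : ℝ)⁻¹ *
      iteratedFDeriv ℝ l φ y (fun _ : Fin l => x)), ?_, ?_⟩
  · exact ContDiff.sum fun l _ => ((hc (b - l)).choose_spec.1).mul
      (contDiff_const.mul (contDiff_diag_iter hφ l))
  · intro n
    rw [pc_eq_sum hzero b n hbK]
    exact Finset.sum_congr rfl fun l _ => by
      rw [(hc (b - l)).choose_spec.2 n]; rfl

lemma smoothSphereFn_exists_bound {f : S2 → ℝ} (hf : SmoothSphereFn f) :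
    ∃ C : ℝ, 0 ≤ C ∧ ∀ n : S2, |f n| ≤ C := by
  obtain ⟨g, hg, hgf⟩ := hf
  obtain ⟨C, hC⟩ := (isCompact_sphere (0 : E3) 1).exists_bound_of_continuousOn
    hg.continuous.continuousOn
  refine ⟨max C 0, le_max_right _ _, fun n => ?_⟩
  rw [← hgf n]
  exact le_trans (hC _ n.2) (le_max_left _ _)

lemma smoothSphereFn_continuous {f : S2 → ℝ} (hf : SmoothSphereFn f) : Continuous f := by
  obtain ⟨g, hg, hgf⟩ := hf
  have : f = fun n : S2 => g (n : E3) := funext fun n => (hgf n).symm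
  rw [this]
  exact hg.continuous.comp continuous_subtype_val

lemma norm_coe_S2 (n : S2) : ‖(n : E3)‖ = 1 := by
  have := n.2
  rwa [mem_sphere_zero_iff_norm] at this

lemma Tcoef_bound (l : ℕ) (n : S2) :
    |Tcoef φ y l n| ≤ (l.factorial : ℝ)⁻¹ * ‖iteratedFDeriv ℝ l φ y‖ := by
  rw [Tcoef, abs_mul, abs_of_nonneg (by positivity : (0:ℝ) ≤ ((l.factorial : ℝ))⁻¹)]
  refine mul_le_mul_of_nonneg_left ?_ (by positivity)
  calc |iteratedFDeriv ℝ l φ y (fun _ => (n : E3))|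
      ≤ ‖iteratedFDeriv ℝ l φ y‖ * ∏ _i : Fin l, ‖(n : E3)‖ :=
        (iteratedFDeriv ℝ l φ y).le_opNorm _
    _ = ‖iteratedFDeriv ℝ l φ y‖ := by simp [norm_coe_S2 n]

end PfAux

namespace PfAux

variable {c : ℝ → S2 → ℝ} {φ : E3 → ℝ} {y : E3} {m₀ : ℕ}

lemma pc_exp_mem' (hzero : ∀ a : ℝ, a < -(m₀ : ℝ) → c a = 0)
    {b : ℝ} {n : S2} (hb : pc c φ y b n ≠ 0) :
    ∃ l : ℕ, c (b - l) ≠ 0 ∧ (l : ℝ) ≤ b + m₀ := by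
  classical
  have : ∃ l : ℕ, c (b - l) n * Tcoef φ y l n ≠ 0 := by
    by_contra h
    push_neg at h
    exact hb (finsum_eq_zero_of_forall_eq_zero h)
  obtain ⟨l, hl⟩ := this
  have hcb : c (b - l) ≠ 0 := fun h0 => by rw [h0] at hl; simp at hl
  refine ⟨l, hcb, ?_⟩
  by_contra h
  push_neg at h
  exact hcb (hzero _ (by linarith))

lemma key_sum_eq (hzero : ∀ a : ℝ, a < -(m₀ : ℝ) → c a = 0)
    (hfin : ∀ N : ℝ, {a : ℝ | a ≤ N ∧ c a ≠ 0}.Finite)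
    (N : ℕ) {r : ℝ} (hr : 0 < r) (n : S2) :
    ∑ᶠ (b : ℝ) (_ : b ≤ (N : ℝ)), r ^ b * pc c φ y b n
      = ∑ q ∈ ((hfin N).toFinset ×ˢ Finset.range (N + m₀ + 1)).filter
          (fun q => q.1 + q.2 ≤ (N : ℝ)),
          (r ^ q.1 * c q.1 n) * (r ^ q.2 * Tcoef φ y q.2 n) := by
  classical
  set M : ℕ := N + m₀ with hM
  set S : Finset ℝ := (hfin N).toFinset with hS
  set W' : Finset (ℝ × ℕ) := (S ×ˢ Finset.range (M + 1)).filter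
      (fun q => q.1 + q.2 ≤ (N : ℝ)) with hW'
  set I : Finset ℝ := W'.image (fun q => q.1 + q.2) with hI
  have hmemS : ∀ a : ℝ, a ∈ S ↔ a ≤ (N : ℝ) ∧ c a ≠ 0 := by
    intro a; rw [hS, Set.Finite.mem_toFinset]; rfl
  -- step 1 : finsum over b ≤ N equals the Finset sum over I
  have h1 : ∑ᶠ (b : ℝ) (_ : b ≤ (N : ℝ)), r ^ b * pc c φ y b n
      = ∑ b ∈ I, r ^ b * pc c φ y b n := by
    apply finsum_mem_eq_sum_of_inter_support_eq
    rw [hI]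
    ext b
    simp only [Set.mem_inter_iff, Function.mem_support, Set.mem_setOf_eq, Finset.coe_image,
      Set.mem_image, Finset.mem_coe]
    constructor
    · rintro ⟨hbN', hsupp⟩
      have hbN : b ≤ (N : ℝ) := hbN'
      have hpc : pc c φ y b n ≠ 0 := by
        intro h0; simp [h0] at hsupp
      obtain ⟨l, hcl, hlb⟩ := pc_exp_mem' hzero hpc
      refine ⟨⟨⟨b - l, l⟩, ?_, by ring⟩, hsupp⟩
      rw [hW', Finset.mem_filter, Finset.mem_product]
      have hlM : l ∈ Finset.range (M + 1) := by
        rw [Finset.mem_range, Nat.lt_succ_iff]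
        have : (l : ℝ) ≤ (M : ℝ) := by push_cast [hM]; linarith
        exact_mod_cast this
      exact ⟨⟨(hmemS (b - l)).mpr ⟨by linarith [Nat.cast_nonneg (α := ℝ) l], hcl⟩, hlM⟩,
        by simpa using hbN⟩
    · rintro ⟨⟨q, hq, rfl⟩, hsupp⟩
      rw [hW', Finset.mem_filter] at hq
      exact ⟨hq.2, hsupp⟩
  rw [h1, ← Finset.sum_fiberwise_of_maps_to (g := fun q : ℝ × ℕ => q.1 + (q.2 : ℝ))
    (fun q hq => Finset.mem_image_of_mem _ hq)]
  -- step 2 : per-fiber identity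
  refine Finset.sum_congr rfl fun b hb => ?_
  rw [Finset.mem_image] at hb
  obtain ⟨q₀, hq₀, hq₀b⟩ := hb
  rw [hW', Finset.mem_filter] at hq₀
  have hbN : b ≤ (N : ℝ) := hq₀b ▸ hq₀.2
  have hbm : b + (m₀ : ℝ) ≤ (M : ℕ) := by push_cast [hM]; linarith
  have hfilter : ∑ l ∈ (Finset.range (M + 1)).filter (fun l : ℕ => c (b - (l : ℝ)) ≠ 0),
      c (b - (l : ℝ)) n * Tcoef φ y l n
      = ∑ l ∈ Finset.range (M + 1), c (b - (l : ℝ)) n * Tcoef φ y l n :=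
    Finset.sum_filter_of_ne (fun l _ hne => by
      intro h0
      exact hne (by rw [h0]; simp))
  rw [pc_eq_sum hzero b n hbm, ← hfilter, Finset.mul_sum]
  refine Finset.sum_nbij' (i := fun l : ℕ => ((b - (l : ℝ), l) : ℝ × ℕ))
    (j := fun q : ℝ × ℕ => q.2) ?_ ?_ ?_ ?_ ?_
  · intro l hl
    rw [Finset.mem_filter, Finset.mem_range] at hl
    have hlb : (l : ℝ) ≤ b + m₀ := by
      by_contra h
      push_neg at h
      exact hl.2 (hzero _ (by linarith))
    have hlM : l ∈ Finset.range (M + 1) := by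
      rw [Finset.mem_range, Nat.lt_succ_iff]
      have : (l : ℝ) ≤ (M : ℝ) := by push_cast [hM]; linarith
      exact_mod_cast this
    rw [Finset.mem_filter, Finset.mem_filter, Finset.mem_product]
    exact ⟨⟨⟨(hmemS (b - (l : ℝ))).mpr ⟨by linarith [Nat.cast_nonneg (α := ℝ) l], hl.2⟩, hlM⟩,
      by simpa using hbN⟩, by simp⟩
  · intro q hq
    rw [Finset.mem_filter, Finset.mem_filter, Finset.mem_product] at hq
    rw [Finset.mem_filter]
    have hq1 : q.1 = b - (q.2 : ℝ) := by linarith [hq.2]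
    refine ⟨hq.1.1.2, ?_⟩
    rw [← hq1]
    exact ((hmemS q.1).mp hq.1.1.1).2
  · intro l hl; simp
  · intro q hq
    rw [Finset.mem_filter, Finset.mem_filter, Finset.mem_product] at hq
    have hq1 : q.1 = b - (q.2 : ℝ) := by linarith [hq.2]
    exact Prod.ext hq1.symm rfl
  · intro l hl
    show r ^ b * (c (b - (l : ℝ)) n * Tcoef φ y l n)
      = r ^ (b - (l : ℝ)) * c (b - (l : ℝ)) n * (r ^ (l : ℕ) * Tcoef φ y l n)
    have : r ^ b = r ^ (b - (l : ℝ)) * r ^ (l : ℕ) := by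
      rw [← Real.rpow_natCast r l, ← Real.rpow_add hr]
      ring_nf
    rw [this]
    ring

end PfAux

namespace PfAux

variable {c : ℝ → S2 → ℝ} {φ : E3 → ℝ} {y : E3} {m₀ : ℕ} {F : E3 → ℝ}

set_option maxHeartbeats 1000000 in
lemma pc_expansion
    (hFc : HasSingExpansion y F c)
    (hzero : ∀ a : ℝ, a < -(m₀ : ℝ) → c a = 0)
    (hint : ∀ a : ℝ, c a ≠ 0 → ∃ k : ℤ, a = (k : ℝ))
    (hφ : ContDiff ℝ (⊤ : ℕ∞) φ) :
    ∀ N : ℕ, ∀ ε > 0, ∃ δ > 0, ∀ r : ℝ, 0 < r → r < δ → ∀ n : S2,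
      |F (y + r • (n : E3)) * φ (y + r • (n : E3))
        - ∑ᶠ (b : ℝ) (_ : b ≤ (N : ℝ)), r ^ b * pc c φ y b n| ≤ ε * r ^ (N : ℝ) := by
  classical
  intro N ε hε
  set M : ℕ := N + m₀ with hM
  set S : Finset ℝ := (hFc.finite_exponents N).toFinset with hS
  have hmemS : ∀ a : ℝ, a ∈ S ↔ a ≤ (N : ℝ) ∧ c a ≠ 0 := by
    intro a; rw [hS, Set.Finite.mem_toFinset]; rfl
  -- bound for φ near y
  obtain ⟨Cφ₀, hCφ₀⟩ := (isCompact_closedBall y 1).exists_bound_of_continuousOn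
    hφ.continuous.continuousOn
  set Cφ : ℝ := max Cφ₀ 0 with hCφdef
  have hCφ : ∀ x ∈ Metric.closedBall y 1, |φ x| ≤ Cφ :=
    fun x hx => le_trans (hCφ₀ x hx) (le_max_left _ _)
  have hCφ0 : 0 ≤ Cφ := le_max_right _ _
  -- bound for the Taylor coefficients
  set BT : ℝ := ∑ l ∈ Finset.range (M + 1), (l.factorial : ℝ)⁻¹ * ‖iteratedFDeriv ℝ l φ y‖
    with hBTdef
  have hBT0 : 0 ≤ BT := Finset.sum_nonneg fun l _ => by positivity
  have hBT : ∀ l ∈ Finset.range (M + 1), ∀ n : S2, |Tcoef φ y l n| ≤ BT := fun l hl n =>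
    le_trans (Tcoef_bound l n)
      (Finset.single_le_sum (f := fun l : ℕ => (l.factorial : ℝ)⁻¹ * ‖iteratedFDeriv ℝ l φ y‖)
        (fun i _ => by positivity) hl)
  -- bound for the coefficients of c
  have hbnd : ∀ a : ℝ, ∃ C : ℝ, 0 ≤ C ∧ ∀ n : S2, |c a n| ≤ C :=
    fun a => smoothSphereFn_exists_bound (hFc.smooth_coeffs a)
  set Bc : ℝ := ∑ a ∈ S, (hbnd a).choose with hBcdef
  have hBc0 : 0 ≤ Bc := Finset.sum_nonneg fun a _ => ((hbnd a).choose_spec.1)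
  have hBc : ∀ a ∈ S, ∀ n : S2, |c a n| ≤ Bc := fun a ha n =>
    le_trans ((hbnd a).choose_spec.2 n)
      (Finset.single_le_sum (f := fun a => (hbnd a).choose)
        (fun i _ => (hbnd i).choose_spec.1) ha)
  -- Taylor remainder bound
  obtain ⟨CT, hCT0, hCT⟩ := taylor_line_bound φ hφ y M
  -- error constant
  set D : ℝ := ((S.card * (M + 1) : ℕ) : ℝ) * (Bc * BT) + S.card * (Bc * CT) with hDdef
  have hD0 : 0 ≤ D := by
    rw [hDdef]
    exact add_nonneg (mul_nonneg (Nat.cast_nonneg _) (mul_nonneg hBc0 hBT0))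
      (mul_nonneg (Nat.cast_nonneg _) (mul_nonneg hBc0 hCT0))
  set ε₁ : ℝ := ε / (2 * (Cφ + 1)) with hε₁def
  have hε₁ : 0 < ε₁ := by
    rw [hε₁def]
    exact div_pos hε (by linarith)
  obtain ⟨δ₁, hδ₁, hFexp⟩ := hFc.expansion N ε₁ hε₁
  refine ⟨min δ₁ (min 1 (ε / (2 * (D + 1)))),
    lt_min hδ₁ (lt_min one_pos (div_pos hε (by linarith))), fun r hr hrδ n => ?_⟩
  have hrδ₁ : r < δ₁ := lt_of_lt_of_le hrδ (min_le_left _ _)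
  have hr1 : r ≤ 1 := le_of_lt (lt_of_lt_of_le hrδ ((min_le_right _ _).trans (min_le_left _ _)))
  have hrε : r ≤ ε / (2 * (D + 1)) :=
    le_of_lt (lt_of_lt_of_le hrδ ((min_le_right _ _).trans (min_le_right _ _)))
  set v : E3 := (n : E3) with hv
  have hvnorm : ‖v‖ = 1 := norm_coe_S2 n
  set A : ℝ := ∑ a ∈ S, r ^ a * c a n with hA
  set P : ℝ := ∑ l ∈ Finset.range (M + 1), r ^ l * Tcoef φ y l n with hP
  -- E1
  have hfinsumA : ∑ᶠ (a : ℝ) (_ : a ≤ (N : ℝ)), r ^ a * c a n = A := by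
    apply finsum_mem_eq_sum_of_inter_support_eq
    ext a
    simp only [Set.mem_inter_iff, Function.mem_support, Set.mem_setOf_eq, Finset.mem_coe]
    constructor
    · rintro ⟨haN, hsupp⟩
      have : c a ≠ 0 := by
        intro h0
        simp [h0] at hsupp
      exact ⟨(hmemS a).mpr ⟨haN, this⟩, hsupp⟩
    · rintro ⟨ha, hsupp⟩
      exact ⟨((hmemS a).mp ha).1, hsupp⟩
  have hE₁ : |F (y + r • v) - A| ≤ ε₁ * r ^ (N : ℝ) := by
    rw [← hfinsumA]
    exact hFexp r hr hrδ₁ n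
  -- E2
  have hE₂ : |φ (y + r • v) - P| ≤ CT * r ^ (M + 1) := by
    have := hCT r hr hr1 v hvnorm
    simpa [hP, Tcoef] using this
  -- the finsum for pc equals the W' sum
  have hQ := key_sum_eq (φ := φ) (y := y) hzero hFc.finite_exponents N hr n
  set W : Finset (ℝ × ℕ) := S ×ˢ Finset.range (M + 1) with hW
  set Q : ℝ := ∑ᶠ (b : ℝ) (_ : b ≤ (N : ℝ)), r ^ b * pc c φ y b n with hQdef
  -- A * P as sum over W
  have hAP : A * P = ∑ q ∈ W, (r ^ q.1 * c q.1 n) * (r ^ q.2 * Tcoef φ y q.2 n) := by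
    rw [hA, hP, Finset.sum_mul_sum, hW, Finset.sum_product]
  -- the cross-term error
  have hsplit : A * P - Q =
      ∑ q ∈ W.filter (fun q => ¬ (q.1 + q.2 ≤ (N : ℝ))),
        (r ^ q.1 * c q.1 n) * (r ^ q.2 * Tcoef φ y q.2 n) := by
    rw [hAP, hQ]
    rw [← Finset.sum_filter_add_sum_filter_not W (fun q => q.1 + q.2 ≤ (N : ℝ))]
    ring
  have hterm : ∀ q ∈ W.filter (fun q => ¬ (q.1 + q.2 ≤ (N : ℝ))),
      |(r ^ q.1 * c q.1 n) * (r ^ q.2 * Tcoef φ y q.2 n)| ≤ r ^ ((N : ℝ) + 1) * (Bc * BT) := by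
    rintro ⟨a, l⟩ hq
    rw [Finset.mem_filter, hW, Finset.mem_product] at hq
    obtain ⟨⟨haS, hlr⟩, hgt⟩ := hq
    push_neg at hgt
    have hcne : c a ≠ 0 := ((hmemS a).mp haS).2
    obtain ⟨k, hk⟩ := hint a hcne
    have hNlt : (N : ℝ) + 1 ≤ a + l := by
      have : ((N : ℤ) : ℝ) < (k : ℝ) + (l : ℕ) := by push_cast; rw [← hk]; exact_mod_cast hgt
      have h2 : (N : ℤ) < k + l := by exact_mod_cast this
      have h3 : (N : ℤ) + 1 ≤ k + l := h2
      calc (N : ℝ) + 1 = (((N : ℤ) + 1 : ℤ) : ℝ) := by push_cast; ring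
        _ ≤ ((k + l : ℤ) : ℝ) := by exact_mod_cast h3
        _ = a + l := by push_cast [hk]; ring
    have hrpow : r ^ a * r ^ (l : ℕ) ≤ r ^ ((N : ℝ) + 1) := by
      rw [← Real.rpow_natCast r l, ← Real.rpow_add hr]
      exact Real.rpow_le_rpow_of_exponent_ge hr hr1 hNlt
    calc |(r ^ a * c a n) * (r ^ (l : ℕ) * Tcoef φ y l n)|
        = (r ^ a * r ^ (l : ℕ)) * (|c a n| * |Tcoef φ y l n|) := by
          rw [abs_mul, abs_mul, abs_mul,
            abs_of_pos (Real.rpow_pos_of_pos hr a), abs_of_pos (pow_pos hr l)]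
          ring
      _ ≤ r ^ ((N : ℝ) + 1) * (Bc * BT) := by
          apply mul_le_mul hrpow ?_ (by positivity) (Real.rpow_nonneg hr.le _)
          exact mul_le_mul (hBc a haS n) (hBT l hlr n) (abs_nonneg _) hBc0
  have hErr3 : |A * P - Q| ≤ ((S.card * (M + 1) : ℕ) : ℝ) * (Bc * BT) * r ^ ((N : ℝ) + 1) := by
    rw [hsplit]
    calc |∑ q ∈ W.filter (fun q => ¬ (q.1 + q.2 ≤ (N : ℝ))),
          (r ^ q.1 * c q.1 n) * (r ^ q.2 * Tcoef φ y q.2 n)|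
        ≤ ∑ q ∈ W.filter (fun q => ¬ (q.1 + q.2 ≤ (N : ℝ))),
          |(r ^ q.1 * c q.1 n) * (r ^ q.2 * Tcoef φ y q.2 n)| := Finset.abs_sum_le_sum_abs _ _
      _ ≤ (W.filter (fun q => ¬ (q.1 + q.2 ≤ (N : ℝ)))).card • (r ^ ((N : ℝ) + 1) * (Bc * BT)) :=
          Finset.sum_le_card_nsmul _ _ _ hterm
      _ ≤ ((S.card * (M + 1) : ℕ) : ℝ) * (Bc * BT) * r ^ ((N : ℝ) + 1) := by
          rw [nsmul_eq_mul]
          have hcard : ((W.filter (fun q => ¬ (q.1 + q.2 ≤ (N : ℝ)))).card : ℝ)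
              ≤ ((S.card * (M + 1) : ℕ) : ℝ) := by
            have := Finset.card_filter_le W (fun q => ¬ (q.1 + q.2 ≤ (N : ℝ)))
            have hWcard : W.card = S.card * (M + 1) := by
              rw [hW, Finset.card_product, Finset.card_range]
            exact_mod_cast hWcard ▸ this
          calc ((W.filter _).card : ℝ) * (r ^ ((N : ℝ) + 1) * (Bc * BT))
              ≤ ((S.card * (M + 1) : ℕ) : ℝ) * (r ^ ((N : ℝ) + 1) * (Bc * BT)) := by
                exact mul_le_mul_of_nonneg_right hcard
                  (mul_nonneg (Real.rpow_nonneg hr.le _) (mul_nonneg hBc0 hBT0))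
            _ = ((S.card * (M + 1) : ℕ) : ℝ) * (Bc * BT) * r ^ ((N : ℝ) + 1) := by ring
  -- |A| bound
  have hAbound : |A| ≤ S.card * Bc * r ^ (-(m₀ : ℝ)) := by
    calc |A| ≤ ∑ a ∈ S, |r ^ a * c a n| := Finset.abs_sum_le_sum_abs _ _
      _ ≤ S.card • (r ^ (-(m₀ : ℝ)) * Bc) := by
          apply Finset.sum_le_card_nsmul
          intro a ha
          rw [abs_mul, abs_of_pos (Real.rpow_pos_of_pos hr a)]
          have hcne : c a ≠ 0 := ((hmemS a).mp ha).2
          have ham : -(m₀ : ℝ) ≤ a := by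
            by_contra h
            push_neg at h
            exact hcne (hzero a h)
          exact mul_le_mul (Real.rpow_le_rpow_of_exponent_ge hr hr1 ham) (hBc a ha n)
            (abs_nonneg _) (Real.rpow_nonneg hr.le _)
      _ = S.card * Bc * r ^ (-(m₀ : ℝ)) := by rw [nsmul_eq_mul]; ring
  -- assemble
  have hpoint : y + r • v ∈ Metric.closedBall y 1 := by
    simp only [Metric.mem_closedBall, dist_self_add_left, norm_smul, hvnorm, mul_one,
      Real.norm_eq_abs]
    rw [abs_of_pos hr]
    exact hr1
  have hmain : F (y + r • v) * φ (y + r • v) - Q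
      = (F (y + r • v) - A) * φ (y + r • v) + A * (φ (y + r • v) - P) + (A * P - Q) := by ring
  have hmid : |A * (φ (y + r • v) - P)| ≤ S.card * (Bc * CT) * r ^ ((N : ℝ) + 1) := by
    rw [abs_mul]
    calc |A| * |φ (y + r • v) - P|
        ≤ (S.card * Bc * r ^ (-(m₀ : ℝ))) * (CT * r ^ (M + 1)) :=
          mul_le_mul hAbound hE₂ (abs_nonneg _)
            (mul_nonneg (mul_nonneg (Nat.cast_nonneg _) hBc0) (Real.rpow_nonneg hr.le _))
      _ = S.card * (Bc * CT) * (r ^ (-(m₀ : ℝ)) * r ^ (M + 1)) := by ring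
      _ = S.card * (Bc * CT) * r ^ ((N : ℝ) + 1) := by
          congr 1
          rw [← Real.rpow_natCast r (M + 1), ← Real.rpow_add hr]
          congr 1
          push_cast [hM]
          ring
  calc |F (y + r • v) * φ (y + r • v) - Q|
      ≤ |(F (y + r • v) - A) * φ (y + r • v)| + |A * (φ (y + r • v) - P)| + |A * P - Q| := by
        rw [hmain]
        exact (abs_add_le _ _).trans (add_le_add_left (abs_add_le _ _) _)
    _ ≤ ε₁ * r ^ (N : ℝ) * Cφ + S.card * (Bc * CT) * r ^ ((N : ℝ) + 1)
        + ((S.card * (M + 1) : ℕ) : ℝ) * (Bc * BT) * r ^ ((N : ℝ) + 1) := by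
        refine add_le_add (add_le_add ?_ hmid) hErr3
        rw [abs_mul]
        exact mul_le_mul hE₁ (hCφ _ hpoint) (abs_nonneg _)
          (mul_nonneg hε₁.le (Real.rpow_nonneg hr.le _))
    _ = ε₁ * Cφ * r ^ (N : ℝ) + D * r ^ ((N : ℝ) + 1) := by rw [hDdef]; ring
    _ ≤ ε * r ^ (N : ℝ) := by
        have hrN : r ^ ((N : ℝ) + 1) = r ^ (N : ℝ) * r := by
          rw [Real.rpow_add hr, Real.rpow_one]
        rw [hrN]
        have h1 : ε₁ * Cφ ≤ ε / 2 := by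
          rw [hε₁def, div_mul_eq_mul_div, div_le_div_iff₀ (by linarith) (by norm_num)]
          nlinarith
        have h2 : D * r ≤ ε / 2 := by
          have hstep : D * r ≤ D * (ε / (2 * (D + 1))) :=
            mul_le_mul_of_nonneg_left hrε hD0
          calc D * r ≤ D * (ε / (2 * (D + 1))) := hstep
            _ ≤ ε / 2 := by
                rw [mul_div_assoc', div_le_div_iff₀ (by linarith) (by norm_num)]
                nlinarith
        have hrpos : (0:ℝ) < r ^ (N : ℝ) := Real.rpow_pos_of_pos hr _
        calc ε₁ * Cφ * r ^ (N : ℝ) + D * (r ^ (N : ℝ) * r)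
            = (ε₁ * Cφ + D * r) * r ^ (N : ℝ) := by ring
          _ ≤ (ε / 2 + ε / 2) * r ^ (N : ℝ) := by
              apply mul_le_mul_of_nonneg_right (add_le_add h1 h2) hrpos.le
          _ = ε * r ^ (N : ℝ) := by ring
end PfAux

namespace PfAux

lemma rpow_tendsto_zero {s : ℝ} (hs : 0 < s) :
    Filter.Tendsto (fun r : ℝ => r ^ s) (nhdsWithin 0 (Set.Ioi 0)) (nhds 0) := by
  have hc : ContinuousAt (fun r : ℝ => r ^ s) 0 := Real.continuousAt_rpow_const 0 s (Or.inr hs.le)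
  have := hc.tendsto
  rw [Real.zero_rpow hs.ne'] at this
  exact this.mono_left nhdsWithin_le_nhds

lemma coeff_unique {q : ℝ → S2 → ℝ}
    (hbdd : ∃ b₀ : ℝ, ∀ b : ℝ, b < b₀ → q b = 0)
    (hfin : ∀ N : ℝ, {b : ℝ | b ≤ N ∧ q b ≠ 0}.Finite)
    (hsmall : ∀ N : ℕ, ∀ ε : ℝ, 0 < ε → ∃ δ > 0, ∀ r : ℝ, 0 < r → r < δ → ∀ n : S2,
      |∑ᶠ (b : ℝ) (_ : b ≤ (N : ℝ)), r ^ b * q b n| ≤ ε * r ^ (N : ℝ)) :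
    ∀ b n, q b n = 0 := by
  classical
  by_contra hcon
  push_neg at hcon
  obtain ⟨a₁, n, hne⟩ := hcon
  set Sfin : Finset ℝ := (hfin a₁).toFinset.filter (fun a => q a n ≠ 0) with hSfin
  have ha₁ : a₁ ∈ Sfin := Finset.mem_filter.mpr
    ⟨(Set.Finite.mem_toFinset _).mpr ⟨le_refl _, fun h0 => hne (by rw [h0]; rfl)⟩, hne⟩
  set astar : ℝ := Sfin.min' ⟨a₁, ha₁⟩ with hastar
  have hastarmem : astar ∈ Sfin := Finset.min'_mem _ _
  have hqastar : q astar n ≠ 0 := (Finset.mem_filter.mp hastarmem).2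
  have hastar_le : astar ≤ a₁ := Finset.min'_le _ _ ha₁
  have hmin : ∀ a : ℝ, q a n ≠ 0 → astar ≤ a := by
    intro a ha
    rcases le_or_gt a a₁ with h | h
    · exact Finset.min'_le Sfin a (Finset.mem_filter.mpr
        ⟨(Set.Finite.mem_toFinset (hfin a₁)).mpr ⟨h, fun h0 => ha (by rw [h0]; rfl)⟩, ha⟩)
    · linarith
  set N : ℕ := ⌈a₁⌉.toNat + 1 with hN
  have hNa₁ : a₁ ≤ (N : ℝ) := by
    push_cast [hN]
    linarith [le_ceil_toNat a₁]
  have hNastar : astar < (N : ℝ) := by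
    push_cast [hN]
    linarith [le_ceil_toNat a₁]
  set SN : Finset ℝ := (hfin N).toFinset with hSN
  have hmemSN : ∀ a : ℝ, a ∈ SN ↔ a ≤ (N : ℝ) ∧ q a ≠ 0 := by
    intro a; rw [hSN, Set.Finite.mem_toFinset]; rfl
  have hastarSN : astar ∈ SN := (hmemSN astar).mpr
    ⟨hastar_le.trans hNa₁, fun h0 => hqastar (by rw [h0]; rfl)⟩
  set Bq : ℝ := ∑ a ∈ SN, |q a n| with hBq
  have hBq0 : 0 ≤ Bq := Finset.sum_nonneg fun a _ => abs_nonneg _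
  set G : Finset ℝ := (SN.erase astar).filter (fun a => q a n ≠ 0) with hG
  set γ : ℝ := if hGne : G.Nonempty then G.min' hGne - astar else 1 with hγdef
  have hγ : 0 < γ := by
    rw [hγdef]
    by_cases hGne : G.Nonempty
    · rw [dif_pos hGne]
      have hm' := Finset.mem_filter.mp (Finset.min'_mem G hGne)
      have h1 : astar ≤ G.min' hGne := hmin _ hm'.2
      have h2 : G.min' hGne ≠ astar := Finset.ne_of_mem_erase hm'.1
      have := lt_of_le_of_ne h1 (Ne.symm h2)
      linarith
    · rw [dif_neg hGne]
      norm_num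
  have hγle : ∀ a ∈ SN.erase astar, q a n ≠ 0 → astar + γ ≤ a := by
    intro a ha hqa
    have haG : a ∈ G := Finset.mem_filter.mpr ⟨ha, hqa⟩
    have hGne : G.Nonempty := ⟨a, haG⟩
    rw [hγdef, dif_pos hGne]
    have h2 := Finset.min'_le G a haG
    have hm' := Finset.mem_filter.mp (Finset.min'_mem G hGne)
    have h1 : astar ≤ G.min' hGne := hmin _ hm'.2
    linarith
  -- main estimate for small r
  obtain ⟨δ, hδ, hsm⟩ := hsmall N 1 one_pos
  set t : ℝ := |q astar n| with ht
  have ht0 : 0 < t := abs_pos.mpr hqastar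
  -- choose r
  have htend : Filter.Tendsto (fun r : ℝ => r ^ ((N : ℝ) - astar) + r ^ γ * Bq)
      (nhdsWithin 0 (Set.Ioi 0)) (nhds 0) := by
    have h1 := rpow_tendsto_zero (by linarith : (0:ℝ) < (N : ℝ) - astar)
    have h2 := (rpow_tendsto_zero hγ).mul_const Bq
    have := h1.add h2
    simpa using this
  have hev1 : ∀ᶠ r in nhdsWithin (0:ℝ) (Set.Ioi 0),
      r ^ ((N : ℝ) - astar) + r ^ γ * Bq < t := htend.eventually (eventually_lt_nhds ht0)
  have hev2 : ∀ᶠ r in nhdsWithin (0:ℝ) (Set.Ioi 0), r < min δ 1 :=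
    eventually_nhdsWithin_of_eventually_nhds (eventually_lt_nhds (lt_min hδ one_pos))
  have hev3 : ∀ᶠ r in nhdsWithin (0:ℝ) (Set.Ioi 0), 0 < r :=
    eventually_mem_nhdsWithin.mono (fun r hr => hr)
  obtain ⟨r, hr1', hr2', hr3'⟩ := (hev1.and (hev2.and hev3)).exists
  have hrδ : r < δ := hr2'.trans_le (min_le_left _ _)
  have hr1 : r ≤ 1 := (hr2'.trans_le (min_le_right _ _)).le
  have hr0 : 0 < r := hr3'
  have hfs := hsm r hr0 hrδ n
  rw [one_mul] at hfs
  have hconv : ∑ᶠ (b : ℝ) (_ : b ≤ (N : ℝ)), r ^ b * q b n = ∑ a ∈ SN, r ^ a * q a n := by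
    apply finsum_mem_eq_sum_of_inter_support_eq
    ext a
    simp only [Set.mem_inter_iff, Function.mem_support, Set.mem_setOf_eq, Finset.mem_coe]
    constructor
    · rintro ⟨haN, hsupp⟩
      refine ⟨(hmemSN a).mpr ⟨haN, fun h0 => hsupp ?_⟩, hsupp⟩
      simp [h0]
    · rintro ⟨ha, hsupp⟩
      exact ⟨((hmemSN a).mp ha).1, hsupp⟩
  have hsplitS : ∑ a ∈ SN, r ^ a * q a n
      = r ^ astar * q astar n + ∑ a ∈ SN.erase astar, r ^ a * q a n :=
    (Finset.add_sum_erase SN _ hastarSN).symm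
  have hRbd : |∑ a ∈ SN.erase astar, r ^ a * q a n| ≤ r ^ (astar + γ) * Bq := by
    calc |∑ a ∈ SN.erase astar, r ^ a * q a n|
        ≤ ∑ a ∈ SN.erase astar, |r ^ a * q a n| := Finset.abs_sum_le_sum_abs _ _
      _ ≤ ∑ a ∈ SN.erase astar, r ^ (astar + γ) * |q a n| := by
          apply Finset.sum_le_sum
          intro a ha
          rw [abs_mul, abs_of_pos (Real.rpow_pos_of_pos hr0 _)]
          by_cases hqa : q a n = 0
          · rw [hqa]
            simp
          · exact mul_le_mul_of_nonneg_right
              (Real.rpow_le_rpow_of_exponent_ge hr0 hr1 (hγle a ha hqa)) (abs_nonneg _)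
      _ = r ^ (astar + γ) * ∑ a ∈ SN.erase astar, |q a n| := by rw [Finset.mul_sum]
      _ ≤ r ^ (astar + γ) * Bq := by
          apply mul_le_mul_of_nonneg_left ?_ (Real.rpow_nonneg hr0.le _)
          exact Finset.sum_le_sum_of_subset_of_nonneg (Finset.erase_subset _ _)
            (fun a _ _ => abs_nonneg _)
  have hkey : r ^ astar * t ≤ r ^ (N : ℝ) + r ^ (astar + γ) * Bq := by
    have h1 : r ^ astar * t = |r ^ astar * q astar n| := by
      rw [abs_mul, abs_of_pos (Real.rpow_pos_of_pos hr0 _), ht]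
    have h2 : r ^ astar * q astar n
        = (∑ a ∈ SN, r ^ a * q a n) - ∑ a ∈ SN.erase astar, r ^ a * q a n := by
      rw [hsplitS]
      ring
    rw [h1, h2, sub_eq_add_neg]
    refine (abs_add_le _ _).trans ?_
    rw [abs_neg]
    exact add_le_add (hconv ▸ hfs) hRbd
  have hfinal : t ≤ r ^ ((N : ℝ) - astar) + r ^ γ * Bq := by
    have hpos : 0 < r ^ astar := Real.rpow_pos_of_pos hr0 _
    rw [← mul_le_mul_iff_right₀ hpos]
    calc r ^ astar * t ≤ r ^ (N : ℝ) + r ^ (astar + γ) * Bq := hkey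
      _ = r ^ astar * (r ^ ((N : ℝ) - astar) + r ^ γ * Bq) := by
          have e1 : astar + ((N : ℝ) - astar) = (N : ℝ) := by ring
          rw [mul_add, ← mul_assoc, ← Real.rpow_add hr0, ← Real.rpow_add hr0, e1]
  linarith

end PfAux

namespace PfAux

variable {c : ℝ → S2 → ℝ} {φ : E3 → ℝ} {y : E3} {m₀ : ℕ}

lemma basis_decomp (v : E3) : v = ∑ i : Fin 3, v i • EuclideanSpace.single i 1 := by
  ext j
  simp [EuclideanSpace.single_apply, Pi.single_apply]

lemma Tcoef_expand (l : ℕ) (v : E3) :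
    iteratedFDeriv ℝ l φ y (fun _ => v)
      = ∑ i : Fin l → Fin 3, (∏ j : Fin l, v (i j)) *
          iteratedFDeriv ℝ l φ y (fun j => EuclideanSpace.single (i j) 1) := by
  classical
  conv_lhs => rw [show (fun _ : Fin l => v) = fun _ : Fin l =>
    ∑ i : Fin 3, v i • EuclideanSpace.single i 1 from funext fun _ => basis_decomp v]
  rw [ContinuousMultilinearMap.map_sum]
  refine Finset.sum_congr rfl fun i _ => ?_
  rw [ContinuousMultilinearMap.map_smul_univ]
  simp [smul_eq_mul]

lemma integrable_dOmega {f : S2 → ℝ} (hf : Continuous f) : Integrable f dOmega := by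
  have h1 : IsFiniteMeasure dOmega := by
    unfold dOmega
    infer_instance
  exact hf.integrable_of_hasCompactSupport (HasCompactSupport.of_compactSpace f)

lemma continuous_Tcoef (hφ : ContDiff ℝ (⊤ : ℕ∞) φ) (l : ℕ) :
    Continuous (fun n : S2 => Tcoef φ y l n) := by
  unfold Tcoef
  exact continuous_const.mul
    (((contDiff_diag_iter (y := y) hφ l).continuous).comp continuous_subtype_val)

lemma continuous_profun {l : ℕ} (i : Fin l → Fin 3) :
    Continuous (fun n : S2 => ∏ j : Fin l, (n : E3) (i j)) :=
  continuous_finset_prod _ fun j _ =>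
    (EuclideanSpace.proj (i j)).continuous.comp continuous_subtype_val

lemma integral_term (hc : ∀ a, SmoothSphereFn (c a)) (hφ : ContDiff ℝ (⊤ : ℕ∞) φ) (l : ℕ) :
    ∫ n : S2, c (-(l : ℝ)) n * Tcoef φ y l n ∂dOmega
      = ∑ i : Fin l → Fin 3, (l.factorial : ℝ)⁻¹ *
          (iteratedFDeriv ℝ l φ y (fun j => EuclideanSpace.single (i j) 1) *
            ∫ n : S2, (∏ j : Fin l, (n : E3) (i j)) * c (-(l : ℝ)) n ∂dOmega) := by
  have hTe : ∀ n : S2, c (-(l : ℝ)) n * Tcoef φ y l n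
      = ∑ i : Fin l → Fin 3, (l.factorial : ℝ)⁻¹ *
          (iteratedFDeriv ℝ l φ y (fun j => EuclideanSpace.single (i j) 1) *
            ((∏ j : Fin l, (n : E3) (i j)) * c (-(l : ℝ)) n)) := by
    intro n
    rw [Tcoef, Tcoef_expand, Finset.mul_sum, Finset.mul_sum]
    exact Finset.sum_congr rfl fun i _ => by ring
  rw [integral_congr_ae (Filter.Eventually.of_forall hTe), integral_finset_sum]
  · refine Finset.sum_congr rfl fun i _ => ?_
    rw [integral_const_mul, integral_const_mul]
  · intro i _
    exact ((integrable_dOmega ((continuous_profun i).mul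
      (smoothSphereFn_continuous (hc _)))).const_mul _).const_mul _

lemma integral_pc_zero (hc : ∀ a, SmoothSphereFn (c a))
    (hzero : ∀ a : ℝ, a < -(m₀ : ℝ) → c a = 0) (hφ : ContDiff ℝ (⊤ : ℕ∞) φ) :
    (4 * π)⁻¹ * ∫ n : S2, pc c φ y 0 n ∂dOmega
      = ∑ l ∈ Finset.range (m₀ + 1),
          (l.factorial : ℝ)⁻¹ *
            ∑ i : Fin l → Fin 3,
              iteratedFDeriv ℝ l φ y (fun j => EuclideanSpace.single (i j) 1) *
                ((4 * π)⁻¹ *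
                  ∫ n : S2, (∏ j : Fin l, (n : E3) (i j)) * c (-(l : ℝ)) n ∂dOmega) := by
  have hpc0 : ∀ n : S2, pc c φ y 0 n
      = ∑ l ∈ Finset.range (m₀ + 1), c (-(l : ℝ)) n * Tcoef φ y l n := by
    intro n
    rw [pc_eq_sum hzero 0 n (by simp : (0:ℝ) + m₀ ≤ (m₀ : ℕ))]
    exact Finset.sum_congr rfl fun l _ => by rw [zero_sub]
  rw [integral_congr_ae (Filter.Eventually.of_forall hpc0), integral_finset_sum]
  · rw [Finset.mul_sum]
    refine Finset.sum_congr rfl fun l _ => ?_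
    rw [integral_term hc hφ l, Finset.mul_sum, Finset.mul_sum]
    exact Finset.sum_congr rfl fun i _ => by ring
  · intro l _
    exact integrable_dOmega ((smoothSphereFn_continuous (hc _)).mul (continuous_Tcoef hφ l))

end PfAux

/-- action of `Pf(Fδ)` on a smooth function: if the exponents of
`F` at `y` are integers `≥ a₀` (with `a₀ ≤ 0`) and `φ` is `C^∞`, then `Fφ`
admits a singular expansion at `y` and
`(Fφ)_y = Σ_{l=0}^{−a₀} (1/l!) Σ_L ∂_Lφ(y) (1/4π)∫ n^L f_{−l} dΩ`. -/
theorem pf_F_delta_on_smooth_functions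
    (y : E3) (F : E3 → ℝ) (c : ℝ → S2 → ℝ)
    (hF : SmoothNearPunctured y F) (hFc : HasSingExpansion y F c)
    (a₀ : ℤ) (ha₀ : a₀ ≤ 0)
    (hexp : ∀ a : ℝ, c a ≠ 0 → ∃ k : ℤ, a₀ ≤ k ∧ a = (k : ℝ))
    (φ : E3 → ℝ) (hφ : ContDiff ℝ (⊤ : ℕ∞) φ) :
    (∃ p, HasSingExpansion y (fun x => F x * φ x) p)
    ∧ ∀ p : ℝ → S2 → ℝ, HasSingExpansion y (fun x => F x * φ x) p →
        pfAt p = ∑ l ∈ Finset.range ((-a₀).toNat + 1),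
          (l.factorial : ℝ)⁻¹ *
            ∑ i : Fin l → Fin 3,
              iteratedFDeriv ℝ l φ y (fun j => EuclideanSpace.single (i j) 1) *
                ((4 * π)⁻¹ *
                  ∫ n : S2, (∏ j : Fin l, (n : E3) (i j)) * c (-(l : ℝ)) n ∂dOmega) := by
  classical
  set m₀ : ℕ := (-a₀).toNat with hm₀
  have hm₀eq : -((m₀ : ℕ) : ℝ) = (a₀ : ℝ) := by
    have h1 : ((-a₀).toNat : ℤ) = -a₀ := Int.toNat_of_nonneg (by omega)
    have h2 : ((m₀ : ℕ) : ℝ) = ((-a₀ : ℤ) : ℝ) := by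
      rw [hm₀]
      exact_mod_cast congrArg (fun z : ℤ => (z : ℝ)) h1
    rw [h2]
    push_cast
    ring
  have hzero : ∀ a : ℝ, a < -(m₀ : ℝ) → c a = 0 := by
    intro a ha
    by_contra hne
    obtain ⟨k, hk1, hk2⟩ := hexp a hne
    rw [hm₀eq, hk2] at ha
    have : (a₀ : ℝ) ≤ (k : ℝ) := by exact_mod_cast hk1
    linarith
  have hint : ∀ a : ℝ, c a ≠ 0 → ∃ k : ℤ, a = (k : ℝ) :=
    fun a h => (hexp a h).imp fun k hk => hk.2
  have hP0 : HasSingExpansion y (fun x => F x * φ x) (PfAux.pc c φ y) :=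
    { smooth_coeffs := fun b => PfAux.smoothSphereFn_pc hFc.smooth_coeffs hφ hzero b
      bddBelow := ⟨-(m₀ : ℝ), PfAux.pc_bddBelow hzero⟩
      finite_exponents := PfAux.pc_finite_exponents hzero hFc.finite_exponents
      expansion := PfAux.pc_expansion hFc hzero hint hφ }
  refine ⟨⟨_, hP0⟩, ?_⟩
  intro p hp
  -- uniqueness of the expansion coefficients
  have hq : ∀ b n, p b n - PfAux.pc c φ y b n = 0 := by
    apply PfAux.coeff_unique (q := fun b n => p b n - PfAux.pc c φ y b n)
    · obtain ⟨b₁, hb₁⟩ := hp.bddBelow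
      refine ⟨min b₁ (-(m₀ : ℝ)), fun b hb => ?_⟩
      funext n
      have e1 := congrFun (hb₁ b (lt_of_lt_of_le hb (min_le_left _ _))) n
      have e2 := congrFun (PfAux.pc_bddBelow (c := c) (φ := φ) (y := y) hzero b
        (lt_of_lt_of_le hb (min_le_right _ _))) n
      simp only [Pi.zero_apply] at e1 e2
      simp [e1, e2]
    · intro N
      apply Set.Finite.subset ((hp.finite_exponents N).union
        ((PfAux.pc_finite_exponents hzero hFc.finite_exponents) N))
      rintro b ⟨hbN, hbne⟩
      have hex : ∃ n : S2, p b n - PfAux.pc c φ y b n ≠ 0 := by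
        by_contra h
        push_neg at h
        exact hbne (funext h)
      obtain ⟨n, hn⟩ := hex
      by_cases hpb : p b = 0
      · right
        refine ⟨hbN, fun h0 => hn ?_⟩
        rw [congrFun hpb n, congrFun h0 n]
        simp
      · exact Or.inl ⟨hbN, hpb⟩
    · intro N ε hε
      obtain ⟨δ₁, hδ₁, h1⟩ := hp.expansion N (ε / 2) (by linarith)
      obtain ⟨δ₂, hδ₂, h2⟩ := hP0.expansion N (ε / 2) (by linarith)
      refine ⟨min δ₁ δ₂, lt_min hδ₁ hδ₂, fun r hr hrδ n => ?_⟩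
      set U : Set ℝ := {b | b ≤ (N : ℝ) ∧ p b ≠ 0} ∪ {b | b ≤ (N : ℝ) ∧ PfAux.pc c φ y b ≠ 0}
        with hU
      have hUfin : U.Finite := (hp.finite_exponents N).union
        ((PfAux.pc_finite_exponents hzero hFc.finite_exponents) N)
      set Uf : Finset ℝ := hUfin.toFinset with hUf
      have hUsubN : ∀ b ∈ Uf, b ≤ (N : ℝ) := by
        intro b hb
        rw [hUf, Set.Finite.mem_toFinset, hU] at hb
        rcases hb with h | h <;> exact h.1
      have conv1 : ∑ᶠ (b : ℝ) (_ : b ≤ (N : ℝ)), r ^ b * p b n = ∑ b ∈ Uf, r ^ b * p b n := by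
        apply finsum_mem_eq_sum_of_inter_support_eq
        ext b
        simp only [Set.mem_inter_iff, Function.mem_support, Set.mem_setOf_eq, Finset.mem_coe]
        constructor
        · rintro ⟨hbN, hsupp⟩
          refine ⟨?_, hsupp⟩
          rw [hUf, Set.Finite.mem_toFinset, hU]
          left
          exact ⟨hbN, fun h0 => hsupp (by simp [congrFun h0 n])⟩
        · rintro ⟨hb, hsupp⟩
          exact ⟨hUsubN b hb, hsupp⟩
      have conv2 : ∑ᶠ (b : ℝ) (_ : b ≤ (N : ℝ)), r ^ b * PfAux.pc c φ y b n
          = ∑ b ∈ Uf, r ^ b * PfAux.pc c φ y b n := by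
        apply finsum_mem_eq_sum_of_inter_support_eq
        ext b
        simp only [Set.mem_inter_iff, Function.mem_support, Set.mem_setOf_eq, Finset.mem_coe]
        constructor
        · rintro ⟨hbN, hsupp⟩
          refine ⟨?_, hsupp⟩
          rw [hUf, Set.Finite.mem_toFinset, hU]
          right
          exact ⟨hbN, fun h0 => hsupp (by simp [congrFun h0 n])⟩
        · rintro ⟨hb, hsupp⟩
          exact ⟨hUsubN b hb, hsupp⟩
      have conv3 : ∑ᶠ (b : ℝ) (_ : b ≤ (N : ℝ)), r ^ b * (p b n - PfAux.pc c φ y b n)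
          = ∑ b ∈ Uf, r ^ b * (p b n - PfAux.pc c φ y b n) := by
        apply finsum_mem_eq_sum_of_inter_support_eq
        ext b
        simp only [Set.mem_inter_iff, Function.mem_support, Set.mem_setOf_eq, Finset.mem_coe]
        constructor
        · rintro ⟨hbN, hsupp⟩
          refine ⟨?_, hsupp⟩
          rw [hUf, Set.Finite.mem_toFinset, hU]
          by_cases hpb : p b = 0
          · right
            refine ⟨hbN, fun h0 => hsupp ?_⟩
            simp [congrFun hpb n, congrFun h0 n]
          · left
            exact ⟨hbN, hpb⟩
        · rintro ⟨hb, hsupp⟩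
          exact ⟨hUsubN b hb, hsupp⟩
      rw [conv3]
      have hsub : ∑ b ∈ Uf, r ^ b * (p b n - PfAux.pc c φ y b n)
          = (∑ b ∈ Uf, r ^ b * p b n) - ∑ b ∈ Uf, r ^ b * PfAux.pc c φ y b n := by
        rw [← Finset.sum_sub_distrib]
        exact Finset.sum_congr rfl fun b _ => by ring
      rw [hsub, ← conv1, ← conv2]
      set G : ℝ := F (y + r • (n : E3)) * φ (y + r • (n : E3)) with hG
      have hd : (∑ᶠ (b : ℝ) (_ : b ≤ (N : ℝ)), r ^ b * p b n)
          - ∑ᶠ (b : ℝ) (_ : b ≤ (N : ℝ)), r ^ b * PfAux.pc c φ y b n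
          = (G - ∑ᶠ (b : ℝ) (_ : b ≤ (N : ℝ)), r ^ b * PfAux.pc c φ y b n)
            - (G - ∑ᶠ (b : ℝ) (_ : b ≤ (N : ℝ)), r ^ b * p b n) := by ring
      rw [hd]
      refine le_trans (abs_sub _ _) ?_
      have hb1 := h1 r hr (lt_of_lt_of_le hrδ (min_le_left _ _)) n
      have hb2 := h2 r hr (lt_of_lt_of_le hrδ (min_le_right _ _)) n
      calc |G - ∑ᶠ (b : ℝ) (_ : b ≤ (N : ℝ)), r ^ b * PfAux.pc c φ y b n|
            + |G - ∑ᶠ (b : ℝ) (_ : b ≤ (N : ℝ)), r ^ b * p b n|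
          ≤ ε / 2 * r ^ (N : ℝ) + ε / 2 * r ^ (N : ℝ) := add_le_add hb2 hb1
        _ = ε * r ^ (N : ℝ) := by ring
  have hp0eq : p 0 = PfAux.pc c φ y 0 := funext fun n => by
    have := hq 0 n
    linarith
  rw [pfAt, hp0eq]
  exact PfAux.integral_pc_zero hFc.smooth_coeffs hzero hφ

end
end
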